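/- arXiv:2008.01821 — 4 statements merged into one kernel-verified Lean document; each statement's English description precedes it below -/
import Mathlib

section
/- Let J be a finite set and (μ_j)_{j∈J} pairwise distinct real numbers. If complex numbers (a_j)_{j∈J} satisfy lim_{t→−∞} Σ_{j∈J} a_j e^{i μ_j t} = 0, then a_j = 0 for all j ∈ J. -/
open Filter Complex

universe u

private lemma exp_aux_key : ∀ (n : ℕ) {J : Type u} [Fintype J] (μ : J → ℝ),
    Fintype.card J ≤ n → Function.Injective μ → ∀ a : J → ℂ,
    Tendsto (fun t : ℝ => ∑ j, a j * Complex.exp (Complex.I * (μ j : ℂ) * (t : ℂ)))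
      atBot (nhds 0) → ∀ j, a j = 0 := by
  intro n
  induction n with
  | zero =>
    intro J _ μ hcard _ a _ j
    have : IsEmpty J := Fintype.card_eq_zero_iff.mp (Nat.le_zero.mp hcard)
    exact (this.false j).elim
  | succ n ih =>
    intro J _ μ hcard hμ a h j
    classical
    -- Step 1: for every s and k ≠ j, a k * (exp(I μ k s) - exp(I μ j s)) = 0
    have key : ∀ s : ℝ, ∀ k : J, k ≠ j →
        a k * (Complex.exp (Complex.I * (μ k : ℂ) * (s : ℂ))
          - Complex.exp (Complex.I * (μ j : ℂ) * (s : ℂ))) = 0 := by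
      intro s
      set J' := {k : J // k ≠ j}
      have hcard' : Fintype.card J' ≤ n := by
        have hlt : Fintype.card J' < Fintype.card J :=
          Fintype.card_subtype_lt (x := j) (by simp)
        omega
      set c : ℂ := Complex.exp (Complex.I * (μ j : ℂ) * (s : ℂ)) with hc
      set a' : J' → ℂ := fun k =>
        a k.1 * (Complex.exp (Complex.I * (μ k.1 : ℂ) * (s : ℂ)) - c) with ha'
      have h1 : Tendsto (fun t : ℝ =>
          (∑ k, a k * Complex.exp (Complex.I * (μ k : ℂ) * ((t + s : ℝ) : ℂ)))
            - c * ∑ k, a k * Complex.exp (Complex.I * (μ k : ℂ) * (t : ℂ)))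
          atBot (nhds 0) := by
        have hcomp : Tendsto (fun t : ℝ => t + s) atBot atBot :=
          tendsto_atBot_add_const_right _ s tendsto_id
        have := (h.comp hcomp).sub ((h.const_mul c))
        simpa using this
      have h2 : Tendsto (fun t : ℝ =>
          ∑ k : J', a' k * Complex.exp (Complex.I * ((μ k.1 : ℝ) : ℂ) * (t : ℂ)))
          atBot (nhds 0) := by
        refine h1.congr fun t => ?_
        have expand : ∀ k : J, a k * Complex.exp (Complex.I * (μ k : ℂ) * ((t + s : ℝ) : ℂ))
            - c * (a k * Complex.exp (Complex.I * (μ k : ℂ) * (t : ℂ)))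
            = (a k * (Complex.exp (Complex.I * (μ k : ℂ) * (s : ℂ)) - c))
              * Complex.exp (Complex.I * (μ k : ℂ) * (t : ℂ)) := by
          intro k
          push_cast
          rw [mul_add, Complex.exp_add]
          ring
        rw [Finset.mul_sum, ← Finset.sum_sub_distrib]
        simp_rw [expand]
        rw [← Finset.sum_subtype (Finset.univ.erase j)
          (fun x => by simp [Finset.mem_erase]) (fun k =>
            (a k * (Complex.exp (Complex.I * (μ k : ℂ) * (s : ℂ)) - c))
              * Complex.exp (Complex.I * (μ k : ℂ) * (t : ℂ)))]
        rw [Finset.sum_erase _ (by simp [hc])]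
      have hμ' : Function.Injective (fun k : J' => μ k.1) :=
        fun x y hxy => Subtype.ext (hμ hxy)
      intro k hk
      exact ih (fun k : J' => μ k.1) hcard' hμ' a' h2 ⟨k, hk⟩
    -- Step 2: a k = 0 for k ≠ j
    have hzero : ∀ k : J, k ≠ j → a k = 0 := by
      intro k hk
      have hne : μ k - μ j ≠ 0 := sub_ne_zero.mpr (fun e => hk (hμ e))
      set s : ℝ := Real.pi / (μ k - μ j) with hs
      have := key s k hk
      rcases mul_eq_zero.mp this with h0 | h0
      · exact h0
      · exfalso
        have hexp : Complex.exp (Complex.I * (μ k : ℂ) * (s : ℂ))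
            = Complex.exp (Complex.I * (μ j : ℂ) * (s : ℂ)) := by
          linear_combination h0
        have : Complex.exp (Complex.I * (μ k : ℂ) * (s : ℂ)
            - Complex.I * (μ j : ℂ) * (s : ℂ)) = 1 := by
          rw [Complex.exp_sub, hexp, div_self (Complex.exp_ne_zero _)]
        have harg : Complex.I * (μ k : ℂ) * (s : ℂ) - Complex.I * (μ j : ℂ) * (s : ℂ)
            = (Real.pi : ℂ) * Complex.I := by
          have : ((μ k : ℝ) - μ j) * s = Real.pi := by
            rw [hs]; field_simp
          rw [show Complex.I * (μ k : ℂ) * (s : ℂ) - Complex.I * (μ j : ℂ) * (s : ℂ)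
            = (((μ k : ℂ) - (μ j : ℂ)) * (s : ℂ)) * Complex.I by ring]
          norm_cast
          rw [this]
        rw [harg, Complex.exp_pi_mul_I] at this
        norm_num at this
    -- Step 3: the sum reduces to the single term j
    have h3 : Tendsto (fun t : ℝ => a j * Complex.exp (Complex.I * (μ j : ℂ) * (t : ℂ)))
        atBot (nhds 0) := by
      refine h.congr fun t => ?_
      exact Fintype.sum_eq_single j (fun k hk => by rw [hzero k hk, zero_mul])
    have h4 : Tendsto (fun _ : ℝ => ‖a j‖) atBot (nhds 0) := by
      have := h3.norm
      simp only [norm_zero] at this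
      refine this.congr fun t => ?_
      rw [norm_mul]
      have : ‖Complex.exp (Complex.I * (μ j : ℂ) * (t : ℂ))‖ = 1 := by
        rw [Complex.norm_exp]
        simp [Complex.mul_re, Complex.mul_im]
      rw [this, mul_one]
    have : ‖a j‖ = 0 := tendsto_nhds_unique tendsto_const_nhds h4
    simpa using this

theorem exp_sum_tendsto_zero_atBot_coeffs_eq_zero
    {J : Type*} [Fintype J] (μ : J → ℝ) (hμ : Function.Injective μ)
    (a : J → ℂ)
    (h : Tendsto (fun t : ℝ => ∑ j, a j * Complex.exp (Complex.I * (μ j : ℂ) * (t : ℂ)))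
      atBot (nhds 0)) :
    ∀ j, a j = 0 :=
  exp_aux_key (Fintype.card J) μ le_rfl hμ a h
end

section
/- Let H, U₁, U₂ be Hilbert spaces, A a self-adjoint positive definite operator on H with compact resolvent whose eigenvalues are 0 < λ₁ < λ₂ < ⋯ with orthogonal eigenspaces, B₁ ∈ L(U₁,H), B₂ ∈ L(U₂,H). Let Z_n ∈ H, write Z_n = Σ_k w_k with w_k eigenvectors of A for λ_k, and set Z(t) = Σ_k w_k e^{λ_k (t−T_n)} for t < T_n. Let α(t) = 1 + (1/2) sin(ω t), ω ≠ 0. If ‖B₁* Z(t)‖²_{U₁} = α(t) ‖B₂* Z(t)‖²_{U₂} for all t < T_n, then B₁* Z(t) = 0 and B₂* Z(t) = 0 for all t < T_n. -/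
open Real Filter
set_option maxHeartbeats 1000000
set_option maxHeartbeats 1000000

lemma aux_normsq {H : Type*} [NormedAddCommGroup H] [InnerProductSpace ℝ H]
    (w : ℕ → H) (horth : ∀ k k', k ≠ k' → (inner ℝ (w k) (w k') : ℝ) = 0)
    (a : ℕ → ℝ) (F : Finset ℕ) :
    ‖∑ i ∈ F, a i • w i‖ ^ 2 = ∑ i ∈ F, (a i) ^ 2 * ‖w i‖ ^ 2 := by
  rw [← real_inner_self_eq_norm_sq, sum_inner]
  refine Finset.sum_congr rfl fun i hi => ?_
  rw [inner_sum]
  rw [Finset.sum_eq_single i]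
  · rw [real_inner_smul_left, real_inner_smul_right, real_inner_self_eq_norm_sq]; ring
  · intro j hj hji
    rw [real_inner_smul_left, real_inner_smul_right, horth i j (Ne.symm hji)]; ring
  · intro h; exact absurd hi h

lemma aux_summable {H : Type*} [NormedAddCommGroup H] [InnerProductSpace ℝ H] [CompleteSpace H]
    (w : ℕ → H) (horth : ∀ k k', k ≠ k' → (inner ℝ (w k) (w k') : ℝ) = 0)
    (a : ℕ → ℝ) (hb : Summable fun k => (a k) ^ 2 * ‖w k‖ ^ 2) :
    Summable fun k => a k • w k := by
  rw [summable_iff_vanishing]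
  intro e he
  rcases Metric.mem_nhds_iff.1 he with ⟨ε, hε, hball⟩
  rcases (summable_iff_vanishing.1 hb) (Metric.ball 0 (ε^2)) (Metric.ball_mem_nhds _ (by positivity)) with ⟨s, hs⟩
  refine ⟨s, fun F hF => ?_⟩
  apply hball
  have h1 := hs F hF
  simp only [Metric.mem_ball, dist_zero_right, Real.norm_eq_abs] at h1 ⊢
  rw [show |∑ b ∈ F, a b ^ 2 * ‖w b‖ ^ 2| = ∑ b ∈ F, a b ^ 2 * ‖w b‖ ^ 2 from
    abs_of_nonneg (Finset.sum_nonneg fun i _ => by positivity)] at h1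
  have h2 : ‖∑ b ∈ F, a b • w b‖ ^ 2 < ε ^ 2 := by
    rw [aux_normsq w horth]; exact h1
  nlinarith [norm_nonneg (∑ b ∈ F, a b • w b)]

lemma aux_tsum_norm_le {H : Type*} [NormedAddCommGroup H] [InnerProductSpace ℝ H] [CompleteSpace H]
    (w : ℕ → H) (horth : ∀ k k', k ≠ k' → (inner ℝ (w k) (w k') : ℝ) = 0)
    (a : ℕ → ℝ) (hb : Summable fun k => (a k) ^ 2 * ‖w k‖ ^ 2) :
    ‖∑' k, a k • w k‖ ^ 2 ≤ ∑' k, (a k) ^ 2 * ‖w k‖ ^ 2 := by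
  have hsummable := aux_summable w horth a hb
  have hhs := hsummable.hasSum
  have h1 : Tendsto (fun F : Finset ℕ => ‖∑ i ∈ F, a i • w i‖ ^ 2) atTop (nhds (‖∑' k, a k • w k‖ ^ 2)) :=
    ((continuous_norm.tendsto _).comp hhs).pow 2
  refine le_of_tendsto h1 (Filter.Eventually.of_forall fun F => ?_)
  rw [aux_normsq w horth]
  exact Summable.sum_le_tsum F (fun i _ => by positivity) hb

lemma aux_coeff_summable {H : Type*} [NormedAddCommGroup H]
    (lam : ℕ → ℝ) (hmono : StrictMono lam) (w : ℕ → H)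
    (hsum : Summable fun k => ‖w k‖ ^ 2) {s : ℝ} (hs : s < 0) :
    Summable fun k => (Real.exp (lam k * s)) ^ 2 * ‖w k‖ ^ 2 := by
  have hf : Summable fun k => (Real.exp (lam 0 * s)) ^ 2 * ‖w k‖ ^ 2 := hsum.mul_left _
  refine Summable.of_nonneg_of_le (fun k => by positivity) (fun k => ?_) hf
  have h1 : lam k * s ≤ lam 0 * s := by
    have : lam 0 ≤ lam k := hmono.monotone (Nat.zero_le k)
    nlinarith
  have h2 : Real.exp (lam k * s) ≤ Real.exp (lam 0 * s) := Real.exp_le_exp.2 h1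
  have h3 : (0:ℝ) < Real.exp (lam k * s) := Real.exp_pos _
  have h4 : (Real.exp (lam k * s))^2 ≤ (Real.exp (lam 0 * s))^2 := by nlinarith
  exact mul_le_mul_of_nonneg_right h4 (sq_nonneg _)

lemma aux_leading {H U : Type*} [NormedAddCommGroup H] [InnerProductSpace ℝ H] [CompleteSpace H]
    [NormedAddCommGroup U] [InnerProductSpace ℝ U] [CompleteSpace U]
    (lam : ℕ → ℝ) (hmono : StrictMono lam)
    (w : ℕ → H) (horth : ∀ k k', k ≠ k' → (inner ℝ (w k) (w k') : ℝ) = 0)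
    (hsum : Summable fun k => ‖w k‖ ^ 2)
    (Tn : ℝ) (Z : ℝ → H)
    (hZ : ∀ t, t < Tn → Z t = ∑' k, Real.exp (lam k * (t - Tn)) • w k)
    (P : H →L[ℝ] U) (m : ℕ) (hm0 : ∀ k, k < m → P (w k) = 0) :
    Filter.Tendsto (fun t => Real.exp (-lam m * (t - Tn)) * ‖P (Z t)‖)
      Filter.atBot (nhds ‖P (w m)‖) := by
  set C : ℝ := ∑' k, ‖w k‖ ^ 2 with hC
  have hC0 : 0 ≤ C := tsum_nonneg (fun k => sq_nonneg _)
  -- key pointwise bound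
  have key : ∀ t, t < Tn →
      ‖Real.exp (-lam m * (t - Tn)) • P (Z t) - P (w m)‖ ≤
        ‖P‖ * Real.sqrt C * Real.exp ((lam (m+1) - lam m) * (t - Tn)) := by
    intro t ht
    set s : ℝ := t - Tn with hsdef
    have hs : s < 0 := by simp [hsdef]; linarith
    set a : ℕ → ℝ := fun k => Real.exp (lam k * s) with ha
    have hb : Summable fun k => (a k) ^ 2 * ‖w k‖ ^ 2 := aux_coeff_summable lam hmono w hsum hs
    have hv : Summable fun k => a k • w k := aux_summable w horth a hb
    -- split
    have hsplit : Z t = (∑ i ∈ Finset.range (m+1), a i • w i) + ∑' i, a (i + (m+1)) • w (i + (m+1)) := by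
      rw [hZ t ht, ← Summable.sum_add_tsum_nat_add (m+1) hv]
    -- finite part under P
    have hfin : P (∑ i ∈ Finset.range (m+1), a i • w i) = a m • P (w m) := by
      rw [map_sum]
      rw [Finset.sum_eq_single m]
      · simp
      · intro j hj hjm
        have hjlt : j < m := lt_of_le_of_ne (Nat.lt_succ_iff.1 (Finset.mem_range.1 hj)) hjm
        simp [hm0 j hjlt]
      · intro h; exact absurd (Finset.self_mem_range_succ m) h
    -- tail bound
    set tail : H := ∑' i, a (i + (m+1)) • w (i + (m+1)) with htail
    have horth' : ∀ k k', k ≠ k' → (inner ℝ (w (k + (m+1))) (w (k' + (m+1))) : ℝ) = 0 :=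
      fun k k' h => horth _ _ (by omega)
    have hb' : Summable fun k => (a (k + (m+1))) ^ 2 * ‖w (k + (m+1))‖ ^ 2 :=
      (summable_nat_add_iff (m+1)).2 hb
    have htail_sq : ‖tail‖ ^ 2 ≤ (Real.exp (lam (m+1) * s)) ^ 2 * C := by
      refine (aux_tsum_norm_le (fun k => w (k + (m+1))) horth' (fun k => a (k + (m+1))) hb').trans ?_
      have h1 : ∑' k, (a (k + (m+1))) ^ 2 * ‖w (k + (m+1))‖ ^ 2 ≤
          ∑' k, (Real.exp (lam (m+1) * s)) ^ 2 * ‖w (k + (m+1))‖ ^ 2 := by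
        refine Summable.tsum_le_tsum (fun k => ?_) hb' (((summable_nat_add_iff (m+1)).2 hsum).mul_left _)
        have h2 : lam (k + (m+1)) * s ≤ lam (m+1) * s := by
          have : lam (m+1) ≤ lam (k + (m+1)) := hmono.monotone (by omega)
          nlinarith
        have h3 := Real.exp_le_exp.2 h2
        have h4 := Real.exp_pos (lam (k + (m+1)) * s)
        have h5 : (a (k + (m+1)))^2 ≤ (Real.exp (lam (m+1) * s))^2 := by
          simp only [ha]; nlinarith
        exact mul_le_mul_of_nonneg_right h5 (sq_nonneg _)
      refine h1.trans ?_
      rw [tsum_mul_left]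
      refine mul_le_mul_of_nonneg_left ?_ (sq_nonneg _)
      exact Summable.tsum_le_tsum_of_inj (fun k => k + (m+1)) (add_left_injective (m+1))
        (fun i _ => sq_nonneg _) (fun k => le_refl _)
        ((summable_nat_add_iff (m+1)).2 hsum) hsum
    have htail_norm : ‖tail‖ ≤ Real.exp (lam (m+1) * s) * Real.sqrt C := by
      have hsq : (Real.exp (lam (m+1) * s) * Real.sqrt C)^2 = (Real.exp (lam (m+1) * s))^2 * C := by
        rw [mul_pow, Real.sq_sqrt hC0]
      calc ‖tail‖ = Real.sqrt (‖tail‖^2) := (Real.sqrt_sq (norm_nonneg _)).symm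
        _ ≤ Real.sqrt ((Real.exp (lam (m+1) * s) * Real.sqrt C)^2) :=
            Real.sqrt_le_sqrt (htail_sq.trans_eq hsq.symm)
        _ = Real.exp (lam (m+1) * s) * Real.sqrt C := Real.sqrt_sq (by positivity)
    -- assemble
    have hPZ : P (Z t) = a m • P (w m) + P tail := by
      rw [hsplit, map_add, hfin]
    have ham : Real.exp (-lam m * s) * a m = 1 := by
      simp only [ha]; rw [← Real.exp_add]; ring_nf; exact Real.exp_zero
    have hdiff : Real.exp (-lam m * s) • P (Z t) - P (w m) = Real.exp (-lam m * s) • P tail := by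
      rw [hPZ, smul_add, smul_smul, ham, one_smul]; abel
    rw [hdiff, norm_smul, Real.norm_eq_abs, abs_of_pos (Real.exp_pos _)]
    calc Real.exp (-lam m * s) * ‖P tail‖
        ≤ Real.exp (-lam m * s) * (‖P‖ * ‖tail‖) :=
          mul_le_mul_of_nonneg_left (P.le_opNorm tail) (Real.exp_pos _).le
      _ ≤ Real.exp (-lam m * s) * (‖P‖ * (Real.exp (lam (m+1) * s) * Real.sqrt C)) := by
          refine mul_le_mul_of_nonneg_left ?_ (Real.exp_pos _).le
          exact mul_le_mul_of_nonneg_left htail_norm (norm_nonneg P)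
      _ = ‖P‖ * Real.sqrt C * Real.exp ((lam (m+1) - lam m) * s) := by
          rw [show (lam (m+1) - lam m) * s = -lam m * s + lam (m+1) * s by ring, Real.exp_add]
          ring
  -- the bound tends to 0
  have hδ : 0 < lam (m+1) - lam m := by have := hmono (Nat.lt_succ_self m); linarith
  have hbound0 : Filter.Tendsto (fun t => ‖P‖ * Real.sqrt C * Real.exp ((lam (m+1) - lam m) * (t - Tn)))
      Filter.atBot (nhds 0) := by
    have h1 : Filter.Tendsto (fun t : ℝ => (lam (m+1) - lam m) * (t - Tn)) Filter.atBot Filter.atBot := by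
      apply Filter.Tendsto.const_mul_atBot hδ
      exact tendsto_atBot_add_const_right _ _ tendsto_id
    have h2 := Real.tendsto_exp_atBot.comp h1
    have := h2.const_mul (‖P‖ * Real.sqrt C)
    simpa [mul_comm] using this
  -- vector convergence
  have hvec : Filter.Tendsto (fun t => Real.exp (-lam m * (t - Tn)) • P (Z t))
      Filter.atBot (nhds (P (w m))) := by
    rw [tendsto_iff_norm_sub_tendsto_zero]
    apply squeeze_zero' (Filter.Eventually.of_forall fun t => norm_nonneg _) _ hbound0
    filter_upwards [Filter.eventually_lt_atBot Tn] with t ht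
    exact key t ht
  have := hvec.norm
  refine this.congr fun t => ?_
  rw [norm_smul, Real.norm_eq_abs, abs_of_pos (Real.exp_pos _)]

lemma aux_zero {H U : Type*} [NormedAddCommGroup H] [InnerProductSpace ℝ H] [CompleteSpace H]
    [NormedAddCommGroup U] [InnerProductSpace ℝ U] [CompleteSpace U]
    (lam : ℕ → ℝ) (hmono : StrictMono lam)
    (w : ℕ → H) (horth : ∀ k k', k ≠ k' → (inner ℝ (w k) (w k') : ℝ) = 0)
    (hsum : Summable fun k => ‖w k‖ ^ 2)
    (Tn : ℝ) (Z : ℝ → H)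
    (hZ : ∀ t, t < Tn → Z t = ∑' k, Real.exp (lam k * (t - Tn)) • w k)
    (P : H →L[ℝ] U) (h0 : ∀ k, P (w k) = 0)
    (t : ℝ) (ht : t < Tn) : P (Z t) = 0 := by
  have hs : t - Tn < 0 := by linarith
  have hb : Summable fun k => (Real.exp (lam k * (t - Tn))) ^ 2 * ‖w k‖ ^ 2 :=
    aux_coeff_summable lam hmono w hsum hs
  have hv : Summable fun k => Real.exp (lam k * (t - Tn)) • w k :=
    aux_summable w horth _ hb
  rw [hZ t ht, (hv.hasSum.mapL P).tsum_eq.symm]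
  simp [h0]

lemma aux_seq {ω : ℝ} (hω : ω ≠ 0) (c : ℝ) :
    ∃ u : ℕ → ℝ, Filter.Tendsto u Filter.atTop Filter.atBot ∧
      ∀ n, Real.sin (ω * u n) = Real.sin c := by
  rcases hω.lt_or_gt with hneg | hpos
  · refine ⟨fun n => (c + 2 * Real.pi * n) / ω, ?_, ?_⟩
    · have h1 : Filter.Tendsto (fun n : ℕ => c + 2 * Real.pi * (n:ℝ)) Filter.atTop Filter.atTop := by
        apply Filter.tendsto_atTop_add_const_left
        exact (tendsto_natCast_atTop_atTop).const_mul_atTop (by positivity)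
      exact (tendsto_div_const_atBot_of_neg hneg).2 h1
    · intro n
      rw [mul_div_cancel₀ _ hω]
      have := Real.sin_add_int_mul_two_pi c (n : ℤ)
      push_cast at this
      rw [← this]; ring_nf
  · refine ⟨fun n => (c - 2 * Real.pi * n) / ω, ?_, ?_⟩
    · have h1 : Filter.Tendsto (fun n : ℕ => c - 2 * Real.pi * (n:ℝ)) Filter.atTop Filter.atBot := by
        apply Filter.tendsto_atBot_add_const_left
        apply Filter.tendsto_neg_atBot_iff.2
        exact (tendsto_natCast_atTop_atTop).const_mul_atTop (by positivity)
      exact (tendsto_div_const_atBot_of_pos hpos).2 h1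
    · intro n
      rw [mul_div_cancel₀ _ hω]
      have := Real.sin_add_int_mul_two_pi c (-(n : ℤ))
      push_cast at this
      rw [← this]; ring_nf

theorem selfadjoint_switching_coincidence
    {H U₁ U₂ : Type*}
    [NormedAddCommGroup H] [InnerProductSpace ℝ H] [CompleteSpace H]
    [NormedAddCommGroup U₁] [InnerProductSpace ℝ U₁] [CompleteSpace U₁]
    [NormedAddCommGroup U₂] [InnerProductSpace ℝ U₂] [CompleteSpace U₂]
    (A : H →ₗ[ℝ] H) (hsym : ∀ x y : H, (inner ℝ (A x) y : ℝ) = inner ℝ x (A y))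
    (lam : ℕ → ℝ) (hmono : StrictMono lam) (hpos : ∀ k, 0 < lam k)
    (w : ℕ → H) (heig : ∀ k, A (w k) = lam k • w k)
    (horth : ∀ k k', k ≠ k' → (inner ℝ (w k) (w k') : ℝ) = 0)
    (Zn : H) (hZn : Zn = ∑' k, w k) (hsum : Summable fun k => ‖w k‖ ^ 2)
    (B₁ : U₁ →L[ℝ] H) (B₂ : U₂ →L[ℝ] H)
    (Tn : ℝ) (Z : ℝ → H)
    (hZ : ∀ t, t < Tn → Z t = ∑' k, Real.exp (lam k * (t - Tn)) • w k)
    (ω : ℝ) (hω : ω ≠ 0)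
    (hcoinc : ∀ t, t < Tn →
      ‖ContinuousLinearMap.adjoint B₁ (Z t)‖ ^ 2 =
        (1 + (1 / 2) * Real.sin (ω * t)) * ‖ContinuousLinearMap.adjoint B₂ (Z t)‖ ^ 2) :
    ∀ t, t < Tn →
      ContinuousLinearMap.adjoint B₁ (Z t) = 0 ∧
      ContinuousLinearMap.adjoint B₂ (Z t) = 0 := by
  set P₁ : H →L[ℝ] U₁ := ContinuousLinearMap.adjoint B₁ with hP₁
  set P₂ : H →L[ℝ] U₂ := ContinuousLinearMap.adjoint B₂ with hP₂
  by_cases h2 : ∀ k, P₂ (w k) = 0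
  · intro t ht
    have hg : P₂ (Z t) = 0 := aux_zero lam hmono w horth hsum Tn Z hZ P₂ h2 t ht
    have hf : ‖P₁ (Z t)‖ ^ 2 = 0 := by rw [hcoinc t ht, hg]; simp
    have : ‖P₁ (Z t)‖ = 0 := by
      have := pow_eq_zero_iff (n := 2) (by norm_num) |>.1 hf
      exact this
    exact ⟨norm_eq_zero.1 this, hg⟩
  · exfalso
    push_neg at h2
    obtain ⟨m₂, hm₂, hm₂0⟩ : ∃ m, P₂ (w m) ≠ 0 ∧ ∀ k, k < m → P₂ (w k) = 0 := by
      classical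
      exact ⟨Nat.find h2, Nat.find_spec h2, fun k hk => not_not.1 (Nat.find_min h2 hk)⟩
    have G := aux_leading lam hmono w horth hsum Tn Z hZ P₂ m₂ hm₂0
    set b : ℝ := ‖P₂ (w m₂)‖ with hbdef
    have hb : 0 < b := norm_pos_iff.2 hm₂
    by_cases h1 : ∀ k, P₁ (w k) = 0
    · -- f ≡ 0 forces g ≡ 0, contradicting G → b > 0
      have hg0 : ∀ t, t < Tn → ‖P₂ (Z t)‖ = 0 := by
        intro t ht
        have hf : P₁ (Z t) = 0 := aux_zero lam hmono w horth hsum Tn Z hZ P₁ h1 t ht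
        have hc := hcoinc t ht
        rw [hf] at hc
        simp only [norm_zero] at hc
        have hα : (0:ℝ) < 1 + 1/2 * Real.sin (ω * t) := by
          nlinarith [Real.neg_one_le_sin (ω * t)]
        have : ‖P₂ (Z t)‖ ^ 2 = 0 := by
          by_contra hne
          have h3 : 0 < ‖P₂ (Z t)‖ ^ 2 :=
            lt_of_le_of_ne (sq_nonneg _) (Ne.symm hne)
          nlinarith
        exact pow_eq_zero_iff (n := 2) (by norm_num) |>.1 this
      have hG0 : Filter.Tendsto (fun t => Real.exp (-lam m₂ * (t - Tn)) * ‖P₂ (Z t)‖)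
          Filter.atBot (nhds 0) := by
        apply Filter.Tendsto.congr' _ tendsto_const_nhds
        filter_upwards [Filter.eventually_lt_atBot Tn] with t ht
        rw [hg0 t ht, mul_zero]
      exact hb.ne' (tendsto_nhds_unique G hG0)
    · push_neg at h1
      obtain ⟨m₁, hm₁, hm₁0⟩ : ∃ m, P₁ (w m) ≠ 0 ∧ ∀ k, k < m → P₁ (w k) = 0 := by
        classical
        exact ⟨Nat.find h1, Nat.find_spec h1, fun k hk => not_not.1 (Nat.find_min h1 hk)⟩
      have F := aux_leading lam hmono w horth hsum Tn Z hZ P₁ m₁ hm₁0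
      set a : ℝ := ‖P₁ (w m₁)‖ with hadef
      have ha : 0 < a := norm_pos_iff.2 hm₁
      set δ : ℝ := lam m₂ - lam m₁ with hδdef
      -- ratio extraction along any sequence where sin (ω t) = sin c
      have ratio : ∀ c : ℝ, ∃ u : ℕ → ℝ, Filter.Tendsto u Filter.atTop Filter.atBot ∧
          Filter.Tendsto (fun n => Real.exp (δ * (u n - Tn))) Filter.atTop
            (nhds (a / (Real.sqrt (1 + 1/2 * Real.sin c) * b))) := by
        intro c
        obtain ⟨u, hu, hsin⟩ := aux_seq hω c
        refine ⟨u, hu, ?_⟩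
        have hαc : 0 < 1 + 1/2 * Real.sin c := by nlinarith [Real.neg_one_le_sin c]
        set r : ℝ := Real.sqrt (1 + 1/2 * Real.sin c) with hr
        have hr0 : 0 < r := Real.sqrt_pos.2 hαc
        have hFu : Filter.Tendsto (fun n => Real.exp (-lam m₁ * (u n - Tn)) * ‖P₁ (Z (u n))‖)
            Filter.atTop (nhds a) := F.comp hu
        have hGu : Filter.Tendsto (fun n => Real.exp (-lam m₂ * (u n - Tn)) * ‖P₂ (Z (u n))‖)
            Filter.atTop (nhds b) := G.comp hu
        have hdiv : Filter.Tendsto (fun n => (Real.exp (-lam m₁ * (u n - Tn)) * ‖P₁ (Z (u n))‖) /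
            (r * (Real.exp (-lam m₂ * (u n - Tn)) * ‖P₂ (Z (u n))‖))) Filter.atTop
            (nhds (a / (r * b))) :=
          hFu.div (tendsto_const_nhds.mul hGu) (by positivity)
        refine hdiv.congr' ?_
        have hev1 : ∀ᶠ n in Filter.atTop, u n < Tn := hu.eventually (Filter.eventually_lt_atBot Tn)
        have hev2 : ∀ᶠ n in Filter.atTop,
            0 < Real.exp (-lam m₂ * (u n - Tn)) * ‖P₂ (Z (u n))‖ := hGu.eventually_const_lt hb
        filter_upwards [hev1, hev2] with n hn1 hn2
        have hP2pos : 0 < ‖P₂ (Z (u n))‖ := by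
          nlinarith [Real.exp_pos (-lam m₂ * (u n - Tn)), norm_nonneg (P₂ (Z (u n)))]
        have hnorm : ‖P₁ (Z (u n))‖ = r * ‖P₂ (Z (u n))‖ := by
          have hcn := hcoinc (u n) hn1
          rw [hsin n] at hcn
          have hsq : ‖P₁ (Z (u n))‖^2 = (r * ‖P₂ (Z (u n))‖)^2 := by
            rw [hcn, mul_pow, hr, Real.sq_sqrt hαc.le]
          calc ‖P₁ (Z (u n))‖ = Real.sqrt (‖P₁ (Z (u n))‖^2) := (Real.sqrt_sq (norm_nonneg _)).symm
            _ = Real.sqrt ((r * ‖P₂ (Z (u n))‖)^2) := by rw [hsq]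
            _ = r * ‖P₂ (Z (u n))‖ := Real.sqrt_sq (by positivity)
        have hexp : Real.exp (δ * (u n - Tn)) * Real.exp (-lam m₂ * (u n - Tn)) =
            Real.exp (-lam m₁ * (u n - Tn)) := by
          rw [← Real.exp_add]; congr 1; rw [hδdef]; ring
        rw [hnorm, div_eq_iff (by positivity), ← hexp]
        ring
      obtain ⟨u, hu, hLu⟩ := ratio (Real.pi/2)
      obtain ⟨v, hv, hLv⟩ := ratio (-(Real.pi/2))
      rw [Real.sin_pi_div_two] at hLu
      rw [Real.sin_neg, Real.sin_pi_div_two] at hLv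
      set A1 : ℝ := Real.sqrt (1 + 1/2 * 1) with hA1def
      set A2 : ℝ := Real.sqrt (1 + 1/2 * -1) with hA2def
      have hA1pos : 0 < A1 := Real.sqrt_pos.2 (by norm_num)
      have hA2pos : 0 < A2 := Real.sqrt_pos.2 (by norm_num)
      have hA1sq : A1^2 = 1 + 1/2 * 1 := Real.sq_sqrt (by norm_num)
      have hA2sq : A2^2 = 1 + 1/2 * -1 := Real.sq_sqrt (by norm_num)
      have hsub : Filter.Tendsto (fun t : ℝ => t - Tn) Filter.atBot Filter.atBot :=
        (Filter.tendsto_atBot_add_const_right Filter.atBot (-Tn) tendsto_id).congr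
          (fun t => (sub_eq_add_neg t Tn).symm)
      rcases lt_trichotomy δ 0 with hδ | hδ | hδ
      · have h1 : Filter.Tendsto (fun t : ℝ => δ * (t - Tn)) Filter.atBot Filter.atTop :=
          (tendsto_const_mul_atTop_of_neg hδ).2 hsub
        have h2 : Filter.Tendsto (fun n => Real.exp (δ * (u n - Tn))) Filter.atTop Filter.atTop :=
          (Real.tendsto_exp_atTop.comp h1).comp hu
        exact not_tendsto_nhds_of_tendsto_atTop h2 _ hLu
      · have hone : Filter.Tendsto (fun n => Real.exp (δ * (u n - Tn))) Filter.atTop (nhds 1) :=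
          tendsto_const_nhds.congr (fun n => by rw [hδ]; simp)
        have hone' : Filter.Tendsto (fun n => Real.exp (δ * (v n - Tn))) Filter.atTop (nhds 1) :=
          tendsto_const_nhds.congr (fun n => by rw [hδ]; simp)
        have e1 : (1:ℝ) = a / (A1 * b) := tendsto_nhds_unique hone hLu
        have e2 : (1:ℝ) = a / (A2 * b) := tendsto_nhds_unique hone' hLv
        rw [eq_div_iff (by positivity)] at e1 e2
        nlinarith [mul_pos hA1pos hb, mul_pos hA2pos hb]
      · have h1 : Filter.Tendsto (fun t : ℝ => δ * (t - Tn)) Filter.atBot Filter.atBot :=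
          (tendsto_const_mul_atBot_of_pos hδ).2 hsub
        have h2 : Filter.Tendsto (fun n => Real.exp (δ * (u n - Tn))) Filter.atTop (nhds 0) :=
          (Real.tendsto_exp_atBot.comp h1).comp hu
        have e0 : (0:ℝ) = a / (A1 * b) := tendsto_nhds_unique h2 hLu
        have : 0 < a / (A1 * b) := by positivity
        linarith
end

section
/- Let H = ℂ^d, U₁, U₂ finite-dimensional, A a d×d matrix with eigenvalues (λ_k), and let Z(t) = Σ_k e^{λ_k (t−T)} Σ_{ℓ=0}^{m_k} (T−t)^ℓ w_{k,ℓ} be a solution of −Z' + A* Z = 0 on ℝ (Jordan-form expansion). Let α(t) = 1 + (1/2) sin(ω t) with ω ∉ W, where W = {0} ∪ { Im(λ_k) − Im(λ_{k₁}), (1/2)(Im(λ_k) − Im(λ_{k₁})) : Re(λ_k) = Re(λ_{k₁}) }. If ‖B₁* Z(t)‖²_{U₁} = α(t) ‖B₂* Z(t)‖²_{U₂} for all t ∈ ℝ, then B₁* Z(t) = 0 and B₂* Z(t) = 0 for all t ∈ ℝ. -/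
open Complex Polynomial Finset

/-- A nonzero complex polynomial does not vanish at all real points. -/
lemma poly_exists_real_ne (φ : Polynomial ℂ) (hφ : φ ≠ 0) : ∃ t : ℝ, φ.eval (t : ℂ) ≠ 0 := by
  by_contra h
  push_neg at h
  apply hφ
  apply Polynomial.eq_zero_of_infinite_isRoot
  exact Set.infinite_of_injective_forall_mem (f := fun t : ℝ => (t : ℂ))
    (fun a b hab => by simpa using hab) (fun t => h t)

/-- A complex polynomial vanishing at all naturals is zero. -/
lemma poly_eq_zero_of_nat (φ : Polynomial ℂ) (h : ∀ n : ℕ, φ.eval (n : ℂ) = 0) : φ = 0 := by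
  apply Polynomial.eq_zero_of_infinite_isRoot
  exact Set.infinite_of_injective_forall_mem (f := fun n : ℕ => (n : ℂ))
    (fun a b hab => by simpa using hab) (fun n => h n)

noncomputable def Tstep (c₀ c : ℂ) (p : Polynomial ℂ) : Polynomial ℂ :=
  C c * (Polynomial.taylor 1 p) - C c₀ * p

lemma Tstep_eval (c₀ c : ℂ) (p : Polynomial ℂ) (x : ℂ) :
    (Tstep c₀ c p).eval x = c * p.eval (x + 1) - c₀ * p.eval x := by
  simp [Tstep, Polynomial.taylor_eval]

lemma taylor_one_leadingCoeff (p : Polynomial ℂ) :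
    (Polynomial.taylor 1 p).coeff p.natDegree = p.leadingCoeff := by
  rcases eq_or_ne p 0 with rfl | hp
  · simp
  rw [Polynomial.taylor_apply]
  have hq : (X + C (1:ℂ)).natDegree = 1 := by
    simpa using Polynomial.natDegree_X_add_C (x := (1:ℂ))
  have hdeg : (p.comp (X + C (1:ℂ))).natDegree = p.natDegree := by
    rw [Polynomial.natDegree_comp, hq, mul_one]
  have hlead : (p.comp (X + C (1:ℂ))).leadingCoeff = p.leadingCoeff := by
    rw [Polynomial.leadingCoeff_comp (by rw [hq]; norm_num)]
    rw [Polynomial.leadingCoeff_X_add_C, one_pow, mul_one]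
  rw [← hdeg]
  exact hlead

lemma Tstep_ne_zero (c₀ c : ℂ) (hc : c ≠ c₀) (p : Polynomial ℂ) (hp : p ≠ 0) :
    Tstep c₀ c p ≠ 0 := by
  intro h
  have hco : (Tstep c₀ c p).coeff p.natDegree = (c - c₀) * p.leadingCoeff := by
    simp only [Tstep, Polynomial.coeff_sub, Polynomial.coeff_C_mul, taylor_one_leadingCoeff]
    rw [Polynomial.coeff_natDegree]
    ring
  rw [h] at hco
  simp only [Polynomial.coeff_zero] at hco
  have := mul_ne_zero (sub_ne_zero.mpr hc) (Polynomial.leadingCoeff_ne_zero.mpr hp)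
  exact this hco.symm

lemma Tstep_self_degree_lt (c₀ : ℂ) (p : Polynomial ℂ) (hp : p ≠ 0) :
    (Tstep c₀ c₀ p).degree < p.degree := by
  have ht0 : Polynomial.taylor 1 p ≠ 0 := by
    intro h
    apply hp
    have := Polynomial.taylor_injective (R := ℂ) (r := 1)
    exact this (by simpa using h)
  have hnd : (Polynomial.taylor 1 p).natDegree = p.natDegree := Polynomial.natDegree_taylor p 1
  have hdeg : (Polynomial.taylor 1 p).degree = p.degree := by
    rw [Polynomial.degree_eq_natDegree ht0, Polynomial.degree_eq_natDegree hp, hnd]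
  have hlc : (Polynomial.taylor 1 p).leadingCoeff = p.leadingCoeff := by
    rw [Polynomial.leadingCoeff, hnd, taylor_one_leadingCoeff]
  have hsub : (Polynomial.taylor 1 p - p).degree < p.degree := by
    have := Polynomial.degree_sub_lt hdeg ht0 hlc
    rwa [hdeg] at this
  have : Tstep c₀ c₀ p = C c₀ * (Polynomial.taylor 1 p - p) := by
    simp [Tstep, mul_sub]
  rw [this]
  calc (C c₀ * (Polynomial.taylor 1 p - p)).degree ≤ (Polynomial.taylor 1 p - p).degree := by
        calc (C c₀ * (Polynomial.taylor 1 p - p)).degree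
            ≤ (C c₀).degree + (Polynomial.taylor 1 p - p).degree := Polynomial.degree_mul_le _ _
          _ ≤ 0 + (Polynomial.taylor 1 p - p).degree := by
              gcongr; exact Polynomial.degree_C_le
          _ = (Polynomial.taylor 1 p - p).degree := by rw [zero_add]
    _ < p.degree := hsub

lemma lemB {ι : Type*} [DecidableEq ι] :
    ∀ (n : ℕ) (F : Finset ι), F.card ≤ n → ∀ (z : ι → ℂ),
      (∀ i ∈ F, z i ≠ 0) → (∀ i ∈ F, ∀ j ∈ F, z i = z j → i = j) →
      ∀ (q : ι → Polynomial ℂ),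
      (∀ n' : ℕ, ∑ i ∈ F, (q i).eval (n' : ℂ) * z i ^ n' = 0) →
      ∀ i ∈ F, q i = 0 := by
  intro n
  induction n with
  | zero =>
    intro F hF z _ _ q _ i hi
    rw [Nat.le_zero, Finset.card_eq_zero] at hF
    subst hF
    exact absurd hi (Finset.notMem_empty i)
  | succ n ih =>
    intro F hF z hz hinj
    rcases F.eq_empty_or_nonempty with rfl | ⟨i₀, hi₀⟩
    · intro q _ i hi; exact absurd hi (Finset.notMem_empty i)
    suffices aux : ∀ (d : ℕ) (q : ι → Polynomial ℂ),
        (q i₀ = 0 ∨ (q i₀).natDegree < d) →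
        (∀ n' : ℕ, ∑ i ∈ F, (q i).eval (n' : ℂ) * z i ^ n' = 0) →
        ∀ i ∈ F, q i = 0 by
      intro q hq
      exact aux ((q i₀).natDegree + 1) q (Or.inr (Nat.lt_succ_self _)) hq
    intro d
    induction d with
    | zero =>
      intro q hq0 hq i hi
      have hqi₀ : q i₀ = 0 := hq0.resolve_right (Nat.not_lt_zero _)
      have herase : ∀ n' : ℕ, ∑ i ∈ F.erase i₀, (q i).eval (n' : ℂ) * z i ^ n' = 0 := by
        intro n'
        have h0 := hq n'
        rw [← Finset.add_sum_erase F _ hi₀] at h0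
        simpa [hqi₀] using h0
      have hcard : (F.erase i₀).card ≤ n := by
        have := Finset.card_erase_of_mem hi₀
        omega
      have hres := ih (F.erase i₀) hcard z
        (fun i hi => hz i (Finset.mem_of_mem_erase hi))
        (fun i hi j hj => hinj i (Finset.mem_of_mem_erase hi) j (Finset.mem_of_mem_erase hj))
        q herase
      rcases eq_or_ne i i₀ with rfl | hne
      · exact hqi₀
      · exact hres i (Finset.mem_erase.mpr ⟨hne, hi⟩)
    | succ d ihd =>
      intro q hq0 hq
      rcases eq_or_ne (q i₀) 0 with hqi₀ | hqi₀
      · exact ihd q (Or.inl hqi₀) hq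
      set q' : ι → Polynomial ℂ := fun i => Tstep (z i₀) (z i) (q i) with hq'def
      have hq'sum : ∀ n' : ℕ, ∑ i ∈ F, (q' i).eval (n' : ℂ) * z i ^ n' = 0 := by
        intro n'
        have h1 := hq (n' + 1)
        have h0 := hq n'
        calc ∑ i ∈ F, (q' i).eval (n' : ℂ) * z i ^ n'
            = (∑ i ∈ F, (q i).eval (((n' + 1 : ℕ)) : ℂ) * z i ^ (n' + 1))
              - z i₀ * ∑ i ∈ F, (q i).eval (n' : ℂ) * z i ^ n' := by
              rw [Finset.mul_sum, ← Finset.sum_sub_distrib]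
              apply Finset.sum_congr rfl
              intro i _
              rw [Tstep_eval]
              push_cast
              ring
          _ = 0 := by rw [h1, h0, mul_zero, sub_zero]
      have hdegd : q' i₀ = 0 ∨ (q' i₀).natDegree < d := by
        rcases eq_or_ne (q' i₀) 0 with h | h
        · exact Or.inl h
        · right
          have hlt : (q' i₀).degree < (q i₀).degree := Tstep_self_degree_lt (z i₀) (q i₀) hqi₀
          have := Polynomial.natDegree_lt_natDegree h hlt
          have hbd : (q i₀).natDegree < d + 1 := hq0.resolve_left hqi₀
          omega
      have hres := ihd q' hdegd hq'sum
      have hqne : ∀ j ∈ F, j ≠ i₀ → q j = 0 := by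
        intro j hj hji
        by_contra hqj
        exact Tstep_ne_zero (z i₀) (z j)
          (fun h => hji (hinj j hj i₀ hi₀ h)) (q j) hqj (hres j hj)
      intro i hi
      rcases eq_or_ne i i₀ with rfl | hne
      · apply poly_eq_zero_of_nat
        intro n'
        have h0 := hq n'
        rw [Finset.sum_eq_single_of_mem i hi
          (fun j hj hji => by rw [hqne j hj hji]; simp)] at h0
        exact (mul_eq_zero.mp h0).resolve_right (pow_ne_zero _ (hz i hi))
      · exact hqne i hi hne

open scoped Real in
lemma exists_good_step (F : Finset ℂ) :
    ∃ s : ℝ, s ≠ 0 ∧ ∀ μ ∈ F, ∀ μ' ∈ F,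
      Complex.exp (μ * s) = Complex.exp (μ' * s) → μ = μ' := by
  classical
  set Bad : Set ℝ := {0} ∪ ⋃ p ∈ (F ×ˢ F : Finset (ℂ × ℂ)).filter (fun p => p.1 ≠ p.2),
      {h : ℝ | Complex.exp (p.1 * h) = Complex.exp (p.2 * h)} with hBad
  have hcnt : Bad.Countable := by
    apply Set.Countable.union (Set.countable_singleton 0)
    apply Set.Countable.biUnion ((Finset.countable_toSet _))
    intro p hp
    rw [Finset.mem_coe, Finset.mem_filter] at hp
    have hne : p.1 - p.2 ≠ 0 := sub_ne_zero.mpr hp.2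
    have hsub : {h : ℝ | Complex.exp (p.1 * h) = Complex.exp (p.2 * h)} ⊆
        ⋃ k : ℤ, {h : ℝ | (h : ℂ) = k * (2 * π * Complex.I) / (p.1 - p.2)} := by
      intro h hh
      rw [Set.mem_setOf_eq, Complex.exp_eq_exp_iff_exists_int] at hh
      obtain ⟨k, hk⟩ := hh
      apply Set.mem_iUnion.mpr ⟨k, ?_⟩
      rw [Set.mem_setOf_eq, eq_div_iff hne]
      linear_combination hk
    apply Set.Countable.mono hsub
    apply Set.countable_iUnion
    intro k
    apply Set.Subsingleton.countable
    intro a ha b hb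
    rw [Set.mem_setOf_eq] at ha hb
    exact_mod_cast ha.trans hb.symm
  have hne : Bad ≠ Set.univ := by
    intro h
    exact Cardinal.not_countable_real (h ▸ hcnt)
  obtain ⟨s, hs⟩ := Set.ne_univ_iff_exists_notMem _ |>.mp hne
  rw [hBad, Set.mem_union, not_or] at hs
  refine ⟨s, fun h => hs.1 (by simp [h]), ?_⟩
  intro μ hμ μ' hμ' hexp
  by_contra hne'
  apply hs.2
  exact Set.mem_biUnion (show (μ, μ') ∈ ((F ×ˢ F).filter (fun p => p.1 ≠ p.2) : Finset (ℂ × ℂ)) from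
    Finset.mem_filter.mpr ⟨Finset.mem_product.mpr ⟨hμ, hμ'⟩, hne'⟩) hexp

lemma lemA (F : Finset ℂ) (p : ℂ → Polynomial ℂ)
    (h : ∀ t : ℝ, ∑ μ ∈ F, Complex.exp (μ * t) * (p μ).eval (t : ℂ) = 0) :
    ∀ μ ∈ F, p μ = 0 := by
  classical
  obtain ⟨s, hs0, hsinj⟩ := exists_good_step F
  have key := lemB F.card F le_rfl (fun μ => Complex.exp (μ * s))
    (fun μ _ => Complex.exp_ne_zero _)
    (fun μ hμ μ' hμ' he => hsinj μ hμ μ' hμ' he)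
    (fun μ => (p μ).comp (Polynomial.C (s : ℂ) * Polynomial.X))
    ?_
  · intro μ hμ
    have hc := key μ hμ
    apply Polynomial.zero_of_eval_zero
    intro x
    have := congrArg (Polynomial.eval (x / s)) hc
    rw [Polynomial.eval_comp] at this
    simp only [Polynomial.eval_mul, Polynomial.eval_C, Polynomial.eval_X,
      Polynomial.eval_zero] at this
    rwa [mul_div_cancel₀ _ (by exact_mod_cast hs0)] at this
  · intro n
    have ht := h (n * s)
    calc ∑ μ ∈ F, ((p μ).comp (Polynomial.C (s:ℂ) * Polynomial.X)).eval (n : ℂ)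
          * Complex.exp (μ * s) ^ n
        = ∑ μ ∈ F, Complex.exp (μ * ((n * s : ℝ) : ℂ)) * (p μ).eval (((n * s : ℝ)) : ℂ) := by
          apply Finset.sum_congr rfl
          intro μ _
          rw [Polynomial.eval_comp, ← Complex.exp_nat_mul]
          simp only [Polynomial.eval_mul, Polynomial.eval_C, Polynomial.eval_X]
          push_cast
          ring_nf
      _ = 0 := ht


noncomputable def myP (a : ℂ) (T : ℝ) (l : ℕ) : Polynomial ℂ :=
  C (Complex.exp (-a * T)) * (C (T : ℂ) - X) ^ l

lemma myP_natDegree_lt (a : ℂ) (T : ℝ) (l N : ℕ) (h : l < N) : (myP a T l).natDegree < N := by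
  have h1 : (C (T : ℂ) - X).natDegree ≤ 1 := by
    refine le_trans (Polynomial.natDegree_sub_le _ _) ?_
    simp [Polynomial.natDegree_C, Polynomial.natDegree_X]
  calc (myP a T l).natDegree ≤ ((C (T : ℂ) - X) ^ l).natDegree :=
        Polynomial.natDegree_C_mul_le _ _
    _ ≤ l * 1 := Polynomial.natDegree_pow_le_of_le l h1
    _ < N := by omega

lemma myP_eval (a : ℂ) (T t : ℝ) (l : ℕ) :
    (myP a T l).eval (t : ℂ) = Complex.exp (-a * T) * (((T - t : ℝ) : ℂ)) ^ l := by
  simp [myP]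

open scoped Classical in
noncomputable def myc {U : Type*} [AddCommGroup U] [Module ℂ U] (K : ℕ) (lam : Fin K → ℂ)
    (m : Fin K → ℕ) (T : ℝ) (b : Fin K → ℕ → U) (μ : ℂ) (j : ℕ) : U :=
  ∑ k ∈ Finset.univ.filter (fun k => lam k = μ), ∑ l ∈ Finset.range (m k + 1),
    (myP (lam k) T l).coeff j • b k l

open scoped Classical in
lemma rep_general {U : Type*} [NormedAddCommGroup U] [NormedSpace ℂ U] (K N : ℕ)
    (lam : Fin K → ℂ) (m : Fin K → ℕ) (hN : ∀ k, m k < N) (T : ℝ)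
    (b : Fin K → ℕ → U) (t : ℝ) :
    ∑ k, Complex.exp (lam k * ((t : ℂ) - (T : ℂ))) •
        (∑ l ∈ Finset.range (m k + 1), (((T - t : ℝ) : ℂ)) ^ l • b k l)
      = ∑ μ ∈ Finset.univ.image lam, Complex.exp (μ * t) •
          (∑ j ∈ Finset.range N, ((t : ℂ)) ^ j • myc K lam m T b μ j) := by
  have inner : ∀ μ : ℂ, ∑ j ∈ Finset.range N, ((t : ℂ)) ^ j • myc K lam m T b μ j
      = ∑ k ∈ Finset.univ.filter (fun k => lam k = μ),
          ∑ l ∈ Finset.range (m k + 1), ((myP (lam k) T l).eval (t : ℂ)) • b k l := by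
    intro μ
    unfold myc
    calc ∑ j ∈ Finset.range N, ((t:ℂ))^j • ∑ k ∈ Finset.univ.filter (fun k => lam k = μ),
            ∑ l ∈ Finset.range (m k + 1), (myP (lam k) T l).coeff j • b k l
        = ∑ j ∈ Finset.range N, ∑ k ∈ Finset.univ.filter (fun k => lam k = μ),
            ∑ l ∈ Finset.range (m k + 1), ((myP (lam k) T l).coeff j * (t:ℂ)^j) • b k l := by
          apply Finset.sum_congr rfl; intro j _
          rw [Finset.smul_sum]
          apply Finset.sum_congr rfl; intro k _
          rw [Finset.smul_sum]
          apply Finset.sum_congr rfl; intro l _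
          rw [smul_smul, mul_comm]
      _ = ∑ k ∈ Finset.univ.filter (fun k => lam k = μ), ∑ j ∈ Finset.range N,
            ∑ l ∈ Finset.range (m k + 1), ((myP (lam k) T l).coeff j * (t:ℂ)^j) • b k l :=
          Finset.sum_comm
      _ = ∑ k ∈ Finset.univ.filter (fun k => lam k = μ), ∑ l ∈ Finset.range (m k + 1),
            ∑ j ∈ Finset.range N, ((myP (lam k) T l).coeff j * (t:ℂ)^j) • b k l := by
          apply Finset.sum_congr rfl; intro k _
          exact Finset.sum_comm
      _ = ∑ k ∈ Finset.univ.filter (fun k => lam k = μ), ∑ l ∈ Finset.range (m k + 1),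
            ((myP (lam k) T l).eval (t:ℂ)) • b k l := by
          apply Finset.sum_congr rfl; intro k _
          apply Finset.sum_congr rfl; intro l hl
          rw [Polynomial.eval_eq_sum_range' (myP_natDegree_lt _ _ _ _
            (lt_of_lt_of_le (Finset.mem_range.mp hl) (Nat.lt_iff_add_one_le.mp (hN k)))),
            Finset.sum_smul]
  have step1 : ∀ k : Fin K,
      Complex.exp (lam k * ((t : ℂ) - (T : ℂ))) •
        (∑ l ∈ Finset.range (m k + 1), (((T - t : ℝ) : ℂ)) ^ l • b k l)
      = Complex.exp (lam k * t) •
        (∑ l ∈ Finset.range (m k + 1), ((myP (lam k) T l).eval (t : ℂ)) • b k l) := by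
    intro k
    have hexp : Complex.exp (lam k * ((t : ℂ) - (T : ℂ)))
        = Complex.exp (lam k * t) * Complex.exp (-(lam k) * T) := by
      rw [← Complex.exp_add]; congr 1; ring
    rw [hexp, mul_smul]
    congr 1
    rw [Finset.smul_sum]
    apply Finset.sum_congr rfl
    intro l _
    rw [myP_eval, smul_smul]
  calc ∑ k, Complex.exp (lam k * ((t : ℂ) - (T : ℂ))) •
        (∑ l ∈ Finset.range (m k + 1), (((T - t : ℝ) : ℂ)) ^ l • b k l)
      = ∑ k, Complex.exp (lam k * t) •
        (∑ l ∈ Finset.range (m k + 1), ((myP (lam k) T l).eval (t : ℂ)) • b k l) :=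
        Finset.sum_congr rfl fun k _ => step1 k
    _ = ∑ μ ∈ Finset.univ.image lam, ∑ k ∈ Finset.univ.filter (fun k => lam k = μ),
          Complex.exp (lam k * t) •
            (∑ l ∈ Finset.range (m k + 1), ((myP (lam k) T l).eval (t : ℂ)) • b k l) :=
        (Finset.sum_fiberwise_of_maps_to
          (fun k _ => Finset.mem_image_of_mem lam (Finset.mem_univ k)) _).symm
    _ = ∑ μ ∈ Finset.univ.image lam, Complex.exp (μ * t) •
          (∑ j ∈ Finset.range N, ((t : ℂ)) ^ j • myc K lam m T b μ j) := by
        apply Finset.sum_congr rfl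
        intro μ hμ
        rw [inner μ, Finset.smul_sum]
        apply Finset.sum_congr rfl
        intro k hk
        rw [(Finset.mem_filter.mp hk).2]


open scoped InnerProductSpace

open scoped Classical in
noncomputable def myG {U : Type*} [NormedAddCommGroup U] [InnerProductSpace ℂ U]
    (N : ℕ) (Λ : Finset ℂ) (c : ℂ → ℕ → U) (ν : ℂ) : Polynomial ℂ :=
  ∑ q ∈ (Λ ×ˢ Λ).filter (fun q => (starRingEnd ℂ) q.1 + q.2 = ν),
    ∑ j ∈ Finset.range N, ∑ j' ∈ Finset.range N,
      C (⟪c q.1 j, c q.2 j'⟫_ℂ) * X ^ (j + j')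

open scoped Classical in
lemma inner_rep {U : Type*} [NormedAddCommGroup U] [InnerProductSpace ℂ U] (N : ℕ)
    (Λ : Finset ℂ) (c : ℂ → ℕ → U) (t : ℝ) :
    ⟪(∑ μ ∈ Λ, Complex.exp (μ * t) • (∑ j ∈ Finset.range N, ((t:ℂ))^j • c μ j)),
     (∑ μ ∈ Λ, Complex.exp (μ * t) • (∑ j ∈ Finset.range N, ((t:ℂ))^j • c μ j))⟫_ℂ
    = ∑ ν ∈ (Λ ×ˢ Λ).image (fun q => (starRingEnd ℂ) q.1 + q.2),
        Complex.exp (ν * t) * (myG N Λ c ν).eval (t:ℂ) := by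
  set P : ℂ → U := fun μ => ∑ j ∈ Finset.range N, ((t:ℂ))^j • c μ j with hP
  have hterm : ∀ μ μ' : ℂ,
      ⟪Complex.exp (μ * t) • P μ, Complex.exp (μ' * t) • P μ'⟫_ℂ
      = Complex.exp (((starRingEnd ℂ) μ + μ') * t) *
          ∑ j ∈ Finset.range N, ∑ j' ∈ Finset.range N,
            ((t:ℂ))^(j+j') * ⟪c μ j, c μ' j'⟫_ℂ := by
    intro μ μ'
    rw [inner_smul_left, inner_smul_right]
    have h1 : (starRingEnd ℂ) (Complex.exp (μ * t)) = Complex.exp ((starRingEnd ℂ) μ * t) := by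
      rw [← Complex.exp_conj, map_mul, Complex.conj_ofReal]
    have h2 : ⟪P μ, P μ'⟫_ℂ = ∑ j ∈ Finset.range N, ∑ j' ∈ Finset.range N,
        ((t:ℂ))^(j+j') * ⟪c μ j, c μ' j'⟫_ℂ := by
      rw [hP]
      rw [sum_inner]
      apply Finset.sum_congr rfl
      intro j _
      rw [inner_sum]
      apply Finset.sum_congr rfl
      intro j' _
      rw [inner_smul_left, inner_smul_right, ← mul_assoc, map_pow, Complex.conj_ofReal, pow_add]
    rw [h2, h1, ← mul_assoc, ← Complex.exp_add, ← add_mul]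
  have hmaps : ∀ q ∈ Λ ×ˢ Λ, (starRingEnd ℂ) q.1 + q.2 ∈
      (Λ ×ˢ Λ).image (fun q => (starRingEnd ℂ) q.1 + q.2) :=
    fun q hq => Finset.mem_image_of_mem _ hq
  calc ⟪(∑ μ ∈ Λ, Complex.exp (μ * t) • P μ), (∑ μ ∈ Λ, Complex.exp (μ * t) • P μ)⟫_ℂ
      = ∑ μ ∈ Λ, ∑ μ' ∈ Λ, ⟪Complex.exp (μ * t) • P μ, Complex.exp (μ' * t) • P μ'⟫_ℂ := by
        rw [sum_inner]
        exact Finset.sum_congr rfl fun μ _ => inner_sum _ _ _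
    _ = ∑ q ∈ Λ ×ˢ Λ, Complex.exp (((starRingEnd ℂ) q.1 + q.2) * t) *
          ∑ j ∈ Finset.range N, ∑ j' ∈ Finset.range N,
            ((t:ℂ))^(j+j') * ⟪c q.1 j, c q.2 j'⟫_ℂ := by
        rw [Finset.sum_product]
        exact Finset.sum_congr rfl fun μ _ => Finset.sum_congr rfl fun μ' _ => hterm μ μ'
    _ = ∑ ν ∈ (Λ ×ˢ Λ).image (fun q => (starRingEnd ℂ) q.1 + q.2),
          ∑ q ∈ (Λ ×ˢ Λ).filter (fun q => (starRingEnd ℂ) q.1 + q.2 = ν),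
            Complex.exp (((starRingEnd ℂ) q.1 + q.2) * t) *
              ∑ j ∈ Finset.range N, ∑ j' ∈ Finset.range N,
                ((t:ℂ))^(j+j') * ⟪c q.1 j, c q.2 j'⟫_ℂ :=
        (Finset.sum_fiberwise_of_maps_to hmaps _).symm
    _ = ∑ ν ∈ (Λ ×ˢ Λ).image (fun q => (starRingEnd ℂ) q.1 + q.2),
          Complex.exp (ν * t) * (myG N Λ c ν).eval (t:ℂ) := by
        apply Finset.sum_congr rfl
        intro ν _
        unfold myG
        rw [Polynomial.eval_finset_sum, Finset.mul_sum]
        apply Finset.sum_congr rfl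
        intro q hq
        rw [(Finset.mem_filter.mp hq).2]
        congr 1
        rw [Polynomial.eval_finset_sum]
        apply Finset.sum_congr rfl
        intro j _
        rw [Polynomial.eval_finset_sum]
        apply Finset.sum_congr rfl
        intro j' _
        rw [Polynomial.eval_mul, Polynomial.eval_C, Polynomial.eval_pow, Polynomial.eval_X,
          mul_comm]


lemma P_inner {U : Type*} [NormedAddCommGroup U] [InnerProductSpace ℂ U] (N : ℕ)
    (c : ℂ → ℕ → U) (t : ℝ) (μ μ' : ℂ) :
    ⟪(∑ j ∈ Finset.range N, ((t:ℂ))^j • c μ j),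
      (∑ j' ∈ Finset.range N, ((t:ℂ))^j' • c μ' j')⟫_ℂ
    = ∑ j ∈ Finset.range N, ∑ j' ∈ Finset.range N,
        ((t:ℂ))^(j+j') * ⟪c μ j, c μ' j'⟫_ℂ := by
  rw [sum_inner]
  apply Finset.sum_congr rfl
  intro j _
  rw [inner_sum]
  apply Finset.sum_congr rfl
  intro j' _
  rw [inner_smul_left, inner_smul_right, ← mul_assoc, map_pow, Complex.conj_ofReal, pow_add]

open scoped Classical in
lemma myG_support {U : Type*} [NormedAddCommGroup U] [InnerProductSpace ℂ U] (N : ℕ)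
    (Λ : Finset ℂ) (c : ℂ → ℕ → U) (ν : ℂ) (h : myG N Λ c ν ≠ 0) :
    ∃ μ ∈ Λ, ∃ μ' ∈ Λ, (starRingEnd ℂ) μ + μ' = ν ∧
      (∃ j ∈ Finset.range N, c μ j ≠ 0) ∧ (∃ j' ∈ Finset.range N, c μ' j' ≠ 0) := by
  by_contra hcon
  push_neg at hcon
  apply h
  unfold myG
  apply Finset.sum_eq_zero
  intro q hq
  rw [Finset.mem_filter] at hq
  obtain ⟨hqm, hqe⟩ := hq
  rw [Finset.mem_product] at hqm
  by_cases h1 : ∃ j ∈ Finset.range N, c q.1 j ≠ 0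
  · have h2 := hcon q.1 hqm.1 q.2 hqm.2 hqe h1
    apply Finset.sum_eq_zero
    intro j _
    apply Finset.sum_eq_zero
    intro j' hj'
    rw [h2 j' hj', inner_zero_right, map_zero, zero_mul]
  · push_neg at h1
    apply Finset.sum_eq_zero
    intro j hj
    apply Finset.sum_eq_zero
    intro j' _
    rw [h1 j hj, inner_zero_left, map_zero, zero_mul]

open scoped Classical in
lemma exists_t_P_ne_zero {U : Type*} [NormedAddCommGroup U] [InnerProductSpace ℂ U] (N : ℕ)
    (cc : ℕ → U) (j₀ : ℕ) (hj₀ : j₀ ∈ Finset.range N) (hc : cc j₀ ≠ 0) :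
    ∃ t : ℝ, (∑ j ∈ Finset.range N, ((t:ℂ))^j • cc j) ≠ 0 := by
  set φ : Polynomial ℂ := ∑ j ∈ Finset.range N, C (⟪cc j₀, cc j⟫_ℂ) * X ^ j with hφ
  have hφne : φ ≠ 0 := by
    intro h
    have hco := congrArg (fun p => Polynomial.coeff p j₀) h
    simp only [hφ, Polynomial.finset_sum_coeff, Polynomial.coeff_C_mul, Polynomial.coeff_X_pow,
      Polynomial.coeff_zero, mul_ite, mul_one, mul_zero] at hco
    rw [Finset.sum_ite_eq (Finset.range N) j₀ (fun j => ⟪cc j₀, cc j⟫_ℂ)] at hco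
    rw [if_pos hj₀] at hco
    exact hc (inner_self_eq_zero.mp hco)
  obtain ⟨t, ht⟩ := poly_exists_real_ne φ hφne
  refine ⟨t, fun h0 => ht ?_⟩
  have hval : ⟪cc j₀, ∑ j ∈ Finset.range N, ((t:ℂ))^j • cc j⟫_ℂ = φ.eval (t:ℂ) := by
    rw [inner_sum, hφ, Polynomial.eval_finset_sum]
    apply Finset.sum_congr rfl
    intro j _
    rw [inner_smul_right, Polynomial.eval_mul, Polynomial.eval_C, Polynomial.eval_pow,
      Polynomial.eval_X, mul_comm]
  rw [h0, inner_zero_right] at hval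
  exact hval.symm

open scoped Classical in
lemma myG_top {U : Type*} [NormedAddCommGroup U] [InnerProductSpace ℂ U] (N : ℕ)
    (Λ : Finset ℂ) (c : ℂ → ℕ → U) (r : ℝ)
    (hmax : ∀ μ ∈ Λ, (∃ j ∈ Finset.range N, c μ j ≠ 0) → μ.re ≤ r)
    (hex : ∃ μ ∈ Λ, μ.re = r ∧ ∃ j ∈ Finset.range N, c μ j ≠ 0) :
    myG N Λ c (((2*r : ℝ) : ℂ)) ≠ 0 := by
  obtain ⟨lam0, hl0Λ, hl0re, j₀, hj₀, hcj₀⟩ := hex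
  obtain ⟨t, ht⟩ := exists_t_P_ne_zero N (c lam0) j₀ hj₀ hcj₀
  intro h0
  have heval : (myG N Λ c (((2*r:ℝ)):ℂ)).eval (t:ℂ)
      = ∑ q ∈ (Λ ×ˢ Λ).filter (fun q => (starRingEnd ℂ) q.1 + q.2 = ((2*r:ℝ):ℂ)),
          ⟪(∑ j ∈ Finset.range N, ((t:ℂ))^j • c q.1 j),
            (∑ j' ∈ Finset.range N, ((t:ℂ))^j' • c q.2 j')⟫_ℂ := by
    unfold myG
    rw [Polynomial.eval_finset_sum]
    apply Finset.sum_congr rfl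
    intro q _
    rw [P_inner, Polynomial.eval_finset_sum]
    apply Finset.sum_congr rfl
    intro j _
    rw [Polynomial.eval_finset_sum]
    apply Finset.sum_congr rfl
    intro j' _
    rw [Polynomial.eval_mul, Polynomial.eval_C, Polynomial.eval_pow, Polynomial.eval_X, mul_comm]
  have hre : 0 < ((myG N Λ c (((2*r:ℝ)):ℂ)).eval (t:ℂ)).re := by
    rw [heval, Complex.re_sum]
    apply Finset.sum_pos'
    · intro q hq
      rw [Finset.mem_filter] at hq
      obtain ⟨hqm, hqe⟩ := hq
      rw [Finset.mem_product] at hqm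
      by_cases h1 : (∃ j ∈ Finset.range N, c q.1 j ≠ 0) ∧ (∃ j ∈ Finset.range N, c q.2 j ≠ 0)
      · have hq1 : q.1.re ≤ r := hmax q.1 hqm.1 h1.1
        have hq2 : q.2.re ≤ r := hmax q.2 hqm.2 h1.2
        have hsum : q.1.re + q.2.re = 2*r := by
          have := congrArg Complex.re hqe
          simpa using this
        have him : q.1.im = q.2.im := by
          have := congrArg Complex.im hqe
          simp at this
          linarith
        have h12 : q.1 = q.2 := Complex.ext (by linarith) him
        rw [h12]
        exact inner_self_nonneg (𝕜 := ℂ) (x := ∑ j ∈ Finset.range N, ((t:ℂ))^j • c q.2 j)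
      · rw [not_and_or] at h1
        rcases h1 with h1 | h1 <;> push_neg at h1
        · have : (∑ j ∈ Finset.range N, ((t:ℂ))^j • c q.1 j) = 0 :=
            Finset.sum_eq_zero fun j hj => by rw [h1 j hj, smul_zero]
          rw [this, inner_zero_left]
          simp
        · have : (∑ j' ∈ Finset.range N, ((t:ℂ))^j' • c q.2 j') = 0 :=
            Finset.sum_eq_zero fun j hj => by rw [h1 j hj, smul_zero]
          rw [this, inner_zero_right]
          simp
    · refine ⟨(lam0, lam0), ?_, ?_⟩
      · rw [Finset.mem_filter, Finset.mem_product]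
        refine ⟨⟨hl0Λ, hl0Λ⟩, ?_⟩
        apply Complex.ext
        · simp [hl0re]; ring
        · simp
      · have key : 0 < RCLike.re (K := ℂ)
            ⟪(∑ j ∈ Finset.range N, ((t:ℂ))^j • c lam0 j),
             (∑ j ∈ Finset.range N, ((t:ℂ))^j • c lam0 j)⟫_ℂ := by
          rw [inner_self_eq_norm_sq]
          have hn : ‖∑ j ∈ Finset.range N, ((t:ℂ))^j • c lam0 j‖ ≠ 0 := norm_ne_zero_iff.mpr ht
          positivity
        exact key
  rw [h0] at hre
  simp at hre


theorem finite_dim_switching_coincidence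
    (d K : ℕ) {U₁ U₂ : Type*}
    [NormedAddCommGroup U₁] [InnerProductSpace ℂ U₁] [FiniteDimensional ℂ U₁]
    [NormedAddCommGroup U₂] [InnerProductSpace ℂ U₂] [FiniteDimensional ℂ U₂]
    (lam : Fin K → ℂ)
    (hord : ∀ k k' : Fin K, k ≤ k' → (lam k).re ≤ (lam k').re)
    (m : Fin K → ℕ) (w : Fin K → ℕ → EuclideanSpace ℂ (Fin d))
    (T : ℝ) (Z : ℝ → EuclideanSpace ℂ (Fin d))
    (hZ : ∀ t : ℝ, Z t = ∑ k, Complex.exp (lam k * ((t : ℂ) - (T : ℂ))) •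
      ∑ l ∈ Finset.range (m k + 1), (((T - t : ℝ) : ℂ) ^ l) • w k l)
    (B₁s : EuclideanSpace ℂ (Fin d) →L[ℂ] U₁)
    (B₂s : EuclideanSpace ℂ (Fin d) →L[ℂ] U₂)
    (ω : ℝ)
    (hω : ω ∉ ({0} ∪
      {x : ℝ | ∃ k k₁ : Fin K, (lam k).re = (lam k₁).re ∧
        (x = (lam k).im - (lam k₁).im ∨ x = ((lam k).im - (lam k₁).im) / 2)} : Set ℝ))
    (hcoinc : ∀ t : ℝ,
      ‖B₁s (Z t)‖ ^ 2 = (1 + (1 / 2) * Real.sin (ω * t)) * ‖B₂s (Z t)‖ ^ 2) :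
    ∀ t : ℝ, B₁s (Z t) = 0 ∧ B₂s (Z t) = 0 := by
  classical
  set N : ℕ := (Finset.univ.sup m) + 1 with hNdef
  have hNk : ∀ k, m k < N := fun k =>
    Nat.lt_succ_of_le (Finset.le_sup (Finset.mem_univ k))
  set Λ : Finset ℂ := Finset.univ.image lam with hΛdef
  set b₁ : Fin K → ℕ → U₁ := fun k l => B₁s (w k l) with hb₁def
  set b₂ : Fin K → ℕ → U₂ := fun k l => B₂s (w k l) with hb₂def
  set c₁ : ℂ → ℕ → U₁ := myc K lam m T b₁ with hc₁def
  set c₂ : ℂ → ℕ → U₂ := myc K lam m T b₂ with hc₂def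
  -- representations
  have hrep₁ : ∀ t : ℝ, B₁s (Z t) = ∑ μ ∈ Λ, Complex.exp (μ * t) •
      (∑ j ∈ Finset.range N, ((t:ℂ))^j • c₁ μ j) := by
    intro t
    rw [hZ t, map_sum]
    have hk : ∀ k : Fin K, B₁s (Complex.exp (lam k * ((t:ℂ) - (T:ℂ))) •
        ∑ l ∈ Finset.range (m k + 1), (((T - t : ℝ):ℂ))^l • w k l)
        = Complex.exp (lam k * ((t:ℂ) - (T:ℂ))) •
          ∑ l ∈ Finset.range (m k + 1), (((T - t : ℝ):ℂ))^l • b₁ k l := by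
      intro k
      rw [map_smul, map_sum]
      congr 1
      exact Finset.sum_congr rfl fun l _ => by rw [map_smul]
    rw [Finset.sum_congr rfl fun k _ => hk k]
    exact rep_general K N lam m hNk T b₁ t
  have hrep₂ : ∀ t : ℝ, B₂s (Z t) = ∑ μ ∈ Λ, Complex.exp (μ * t) •
      (∑ j ∈ Finset.range N, ((t:ℂ))^j • c₂ μ j) := by
    intro t
    rw [hZ t, map_sum]
    have hk : ∀ k : Fin K, B₂s (Complex.exp (lam k * ((t:ℂ) - (T:ℂ))) •
        ∑ l ∈ Finset.range (m k + 1), (((T - t : ℝ):ℂ))^l • w k l)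
        = Complex.exp (lam k * ((t:ℂ) - (T:ℂ))) •
          ∑ l ∈ Finset.range (m k + 1), (((T - t : ℝ):ℂ))^l • b₂ k l := by
      intro k
      rw [map_smul, map_sum]
      congr 1
      exact Finset.sum_congr rfl fun l _ => by rw [map_smul]
    rw [Finset.sum_congr rfl fun k _ => hk k]
    exact rep_general K N lam m hNk T b₂ t
  -- the two support sets
  set nz₁ : Finset ℂ := Λ.filter (fun μ => ∃ j ∈ Finset.range N, c₁ μ j ≠ 0) with hnz₁def
  set nz₂ : Finset ℂ := Λ.filter (fun μ => ∃ j ∈ Finset.range N, c₂ μ j ≠ 0) with hnz₂def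
  -- easy case A : c₂ vanishes identically
  by_cases hA : nz₂ = ∅
  · have hv : ∀ t : ℝ, B₂s (Z t) = 0 := by
      intro t
      rw [hrep₂ t]
      apply Finset.sum_eq_zero
      intro μ hμ
      have hμ' : ¬ ∃ j ∈ Finset.range N, c₂ μ j ≠ 0 := by
        intro hcontra
        have : μ ∈ nz₂ := Finset.mem_filter.mpr ⟨hμ, hcontra⟩
        rw [hA] at this
        exact absurd this (Finset.notMem_empty μ)
      push_neg at hμ'
      rw [Finset.sum_eq_zero fun j hj => by rw [hμ' j hj, smul_zero], smul_zero]
    intro t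
    refine ⟨?_, hv t⟩
    have h := hcoinc t
    rw [hv t] at h
    simp only [norm_zero, ne_eq, OfNat.ofNat_ne_zero, not_false_eq_true, zero_pow, mul_zero] at h
    exact norm_eq_zero.mp ((pow_eq_zero_iff (two_ne_zero)).mp h)
  -- easy case B : c₁ vanishes identically
  by_cases hB : nz₁ = ∅
  · have hu : ∀ t : ℝ, B₁s (Z t) = 0 := by
      intro t
      rw [hrep₁ t]
      apply Finset.sum_eq_zero
      intro μ hμ
      have hμ' : ¬ ∃ j ∈ Finset.range N, c₁ μ j ≠ 0 := by
        intro hcontra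
        have : μ ∈ nz₁ := Finset.mem_filter.mpr ⟨hμ, hcontra⟩
        rw [hB] at this
        exact absurd this (Finset.notMem_empty μ)
      push_neg at hμ'
      rw [Finset.sum_eq_zero fun j hj => by rw [hμ' j hj, smul_zero], smul_zero]
    intro t
    refine ⟨hu t, ?_⟩
    have h := hcoinc t
    rw [hu t] at h
    simp only [norm_zero, ne_eq, OfNat.ofNat_ne_zero, not_false_eq_true, zero_pow] at h
    have hα : (0:ℝ) < 1 + 1/2 * Real.sin (ω * t) := by
      nlinarith [Real.neg_one_le_sin (ω * t)]
    have h2 : ‖B₂s (Z t)‖ ^ 2 = 0 := by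
      rcases mul_eq_zero.mp h.symm with h' | h'
      · exact absurd h' (ne_of_gt hα)
      · exact h'
    exact norm_eq_zero.mp ((pow_eq_zero_iff (two_ne_zero)).mp h2)
  -- main case: both nonempty, derive a contradiction
  exfalso
  have hnz₁ne : nz₁.Nonempty := Finset.nonempty_of_ne_empty hB
  have hnz₂ne : nz₂.Nonempty := Finset.nonempty_of_ne_empty hA
  set S : Finset ℂ := (Λ ×ˢ Λ).image (fun q => (starRingEnd ℂ) q.1 + q.2) with hSdef
  set Gf : ℂ → Polynomial ℂ := myG N Λ c₁ with hGfdef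
  set Gg : ℂ → Polynomial ℂ := myG N Λ c₂ with hGgdef
  have hFsupp : ∀ ν, Gf ν ≠ 0 → ν ∈ S := by
    intro ν h
    obtain ⟨μ, hμ, μ', hμ', he, _, _⟩ := myG_support N Λ c₁ ν h
    exact Finset.mem_image.mpr ⟨(μ, μ'), Finset.mem_product.mpr ⟨hμ, hμ'⟩, he⟩
  have hGsupp : ∀ ν, Gg ν ≠ 0 → ν ∈ S := by
    intro ν h
    obtain ⟨μ, hμ, μ', hμ', he, _, _⟩ := myG_support N Λ c₂ ν h
    exact Finset.mem_image.mpr ⟨(μ, μ'), Finset.mem_product.mpr ⟨hμ, hμ'⟩, he⟩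
  have hfex : ∀ t : ℝ, ⟪B₁s (Z t), B₁s (Z t)⟫_ℂ
      = ∑ ν ∈ S, Complex.exp (ν * t) * (Gf ν).eval (t:ℂ) := by
    intro t
    rw [hrep₁ t]
    exact inner_rep N Λ c₁ t
  have hgex : ∀ t : ℝ, ⟪B₂s (Z t), B₂s (Z t)⟫_ℂ
      = ∑ ν ∈ S, Complex.exp (ν * t) * (Gg ν).eval (t:ℂ) := by
    intro t
    rw [hrep₂ t]
    exact inner_rep N Λ c₂ t
  set ζ : ℂ := Complex.I * (ω:ℂ) with hζdef
  have hζre : ζ.re = 0 := by simp [hζdef]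
  have hζim : ζ.im = ω := by simp [hζdef]
  -- the coincidence identity over ℂ
  have hnormc₁ : ∀ x : U₁, ((‖x‖:ℂ))^2 = ⟪x, x⟫_ℂ := fun x =>
    (inner_self_eq_norm_sq_to_K x).symm
  have hnormc₂ : ∀ x : U₂, ((‖x‖:ℂ))^2 = ⟪x, x⟫_ℂ := fun x =>
    (inner_self_eq_norm_sq_to_K x).symm
  have hco : ∀ t : ℝ, ⟪B₁s (Z t), B₁s (Z t)⟫_ℂ
      = ⟪B₂s (Z t), B₂s (Z t)⟫_ℂ
        + (Complex.I/4) * Complex.exp (-ζ * t) * ⟪B₂s (Z t), B₂s (Z t)⟫_ℂ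
        - (Complex.I/4) * Complex.exp (ζ * t) * ⟪B₂s (Z t), B₂s (Z t)⟫_ℂ := by
    intro t
    have h := congrArg (fun x : ℝ => (x : ℂ)) (hcoinc t)
    push_cast at h
    rw [hnormc₁, hnormc₂] at h
    rw [h]
    have hsin : (Complex.sin ((ω:ℂ) * (t:ℂ)))
        = (Complex.exp (-ζ * t) - Complex.exp (ζ * t)) * Complex.I / 2 := by
      rw [Complex.sin]
      congr 3
      · congr 1; rw [hζdef]; ring
      · congr 1; rw [hζdef]; ring
    rw [hsin]
    ring
  -- master exponential-polynomial identity
  set c4 : ℂ := Complex.I/4 with hc4def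
  set Tt : Finset ℂ := (S ∪ S.image (fun μ => μ + ζ)) ∪ S.image (fun μ => μ - ζ) with hTtdef
  set Hf : ℂ → Polynomial ℂ := fun ν =>
    Gf ν - Gg ν - C c4 * Gg (ν + ζ) + C c4 * Gg (ν - ζ) with hHfdef
  have hsub1 : S ⊆ Tt := fun x hx =>
    Finset.mem_union_left _ (Finset.mem_union_left _ hx)
  have hsub2 : S.image (fun μ => μ + ζ) ⊆ Tt := fun x hx =>
    Finset.mem_union_left _ (Finset.mem_union_right _ hx)
  have hsub3 : S.image (fun μ => μ - ζ) ⊆ Tt := fun x hx =>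
    Finset.mem_union_right _ hx
  -- plain extension
  have hplain : ∀ (GG : ℂ → Polynomial ℂ), (∀ ν, GG ν ≠ 0 → ν ∈ S) → ∀ t : ℝ,
      ∑ ν ∈ Tt, Complex.exp (ν * t) * (GG ν).eval (t:ℂ)
        = ∑ ν ∈ S, Complex.exp (ν * t) * (GG ν).eval (t:ℂ) := by
    intro GG hGG t
    refine (Finset.sum_subset hsub1 fun ν _ hν => ?_).symm
    have h0 : GG ν = 0 := by
      by_contra h
      exact hν (hGG ν h)
    rw [h0, Polynomial.eval_zero, mul_zero]
  -- shifted extensions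
  have hshiftP : ∀ t : ℝ,
      ∑ ν ∈ Tt, Complex.exp (ν * t) * (Gg (ν - ζ)).eval (t:ℂ)
        = Complex.exp (ζ * t) * ∑ μ ∈ S, Complex.exp (μ * t) * (Gg μ).eval (t:ℂ) := by
    intro t
    have hres : ∑ ν ∈ Tt, Complex.exp (ν * t) * (Gg (ν - ζ)).eval (t:ℂ)
        = ∑ ν ∈ S.image (fun μ => μ + ζ), Complex.exp (ν * t) * (Gg (ν - ζ)).eval (t:ℂ) := by
      refine (Finset.sum_subset hsub2 fun ν _ hν => ?_).symm
      have h0 : Gg (ν - ζ) = 0 := by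
        by_contra h
        exact hν (Finset.mem_image.mpr ⟨ν - ζ, hGsupp _ h, by ring⟩)
      rw [h0, Polynomial.eval_zero, mul_zero]
    rw [hres, Finset.sum_image (fun a _ b _ h => by
      have := congrArg (fun x => x - ζ) h
      simpa using this)]
    rw [Finset.mul_sum]
    apply Finset.sum_congr rfl
    intro μ _
    have h1 : μ + ζ - ζ = μ := by ring
    have h2 : Complex.exp ((μ + ζ) * t) = Complex.exp (ζ * t) * Complex.exp (μ * t) := by
      rw [← Complex.exp_add]; congr 1; ring
    rw [h1, h2]
    ring
  have hshiftM : ∀ t : ℝ,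
      ∑ ν ∈ Tt, Complex.exp (ν * t) * (Gg (ν + ζ)).eval (t:ℂ)
        = Complex.exp (-ζ * t) * ∑ μ ∈ S, Complex.exp (μ * t) * (Gg μ).eval (t:ℂ) := by
    intro t
    have hres : ∑ ν ∈ Tt, Complex.exp (ν * t) * (Gg (ν + ζ)).eval (t:ℂ)
        = ∑ ν ∈ S.image (fun μ => μ - ζ), Complex.exp (ν * t) * (Gg (ν + ζ)).eval (t:ℂ) := by
      refine (Finset.sum_subset hsub3 fun ν _ hν => ?_).symm
      have h0 : Gg (ν + ζ) = 0 := by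
        by_contra h
        exact hν (Finset.mem_image.mpr ⟨ν + ζ, hGsupp _ h, by ring⟩)
      rw [h0, Polynomial.eval_zero, mul_zero]
    rw [hres, Finset.sum_image (fun a _ b _ h => by
      have := congrArg (fun x => x + ζ) h
      simpa using this)]
    rw [Finset.mul_sum]
    apply Finset.sum_congr rfl
    intro μ _
    have h1 : μ - ζ + ζ = μ := by ring
    have h2 : Complex.exp ((μ - ζ) * t) = Complex.exp (-ζ * t) * Complex.exp (μ * t) := by
      rw [← Complex.exp_add]; congr 1; ring
    rw [h1, h2]
    ring
  have hmaster : ∀ t : ℝ, ∑ ν ∈ Tt, Complex.exp (ν * t) * (Hf ν).eval (t:ℂ) = 0 := by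
    intro t
    have hexpand : ∑ ν ∈ Tt, Complex.exp (ν * t) * (Hf ν).eval (t:ℂ)
        = (∑ ν ∈ Tt, Complex.exp (ν * t) * (Gf ν).eval (t:ℂ))
          - (∑ ν ∈ Tt, Complex.exp (ν * t) * (Gg ν).eval (t:ℂ))
          - c4 * (∑ ν ∈ Tt, Complex.exp (ν * t) * (Gg (ν + ζ)).eval (t:ℂ))
          + c4 * (∑ ν ∈ Tt, Complex.exp (ν * t) * (Gg (ν - ζ)).eval (t:ℂ)) := by
      rw [Finset.mul_sum, Finset.mul_sum, ← Finset.sum_sub_distrib, ← Finset.sum_sub_distrib,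
        ← Finset.sum_add_distrib]
      apply Finset.sum_congr rfl
      intro ν _
      rw [hHfdef]
      simp only [Polynomial.eval_add, Polynomial.eval_sub, Polynomial.eval_mul,
        Polynomial.eval_C]
      ring
    rw [hexpand, hplain Gf hFsupp t, hplain Gg hGsupp t, hshiftM t, hshiftP t]
    have h := hco t
    rw [hfex t, hgex t] at h
    linear_combination h
  have hHzero : ∀ ν : ℂ, Hf ν = 0 := by
    have hmem := lemA Tt Hf hmaster
    intro ν
    by_cases hν : ν ∈ Tt
    · exact hmem ν hν
    · have h1 : Gf ν = 0 := by
        by_contra h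
        exact hν (hsub1 (hFsupp ν h))
      have h2 : Gg ν = 0 := by
        by_contra h
        exact hν (hsub1 (hGsupp ν h))
      have h3 : Gg (ν - ζ) = 0 := by
        by_contra h
        exact hν (hsub2 (Finset.mem_image.mpr ⟨ν - ζ, hGsupp _ h, by ring⟩))
      have h4 : Gg (ν + ζ) = 0 := by
        by_contra h
        exact hν (hsub3 (Finset.mem_image.mpr ⟨ν + ζ, hGsupp _ h, by ring⟩))
      rw [hHfdef]
      simp only [h1, h2, h3, h4, mul_zero, sub_zero, add_zero, zero_sub, neg_zero]
  -- define r₁ r₂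
  set r₁ : ℝ := (nz₁.image Complex.re).max' (hnz₁ne.image _) with hr₁def
  set r₂ : ℝ := (nz₂.image Complex.re).max' (hnz₂ne.image _) with hr₂def
  have hr₁max : ∀ μ ∈ nz₁, μ.re ≤ r₁ := fun μ hμ =>
    Finset.le_max' _ _ (Finset.mem_image_of_mem _ hμ)
  have hr₂max : ∀ μ ∈ nz₂, μ.re ≤ r₂ := fun μ hμ =>
    Finset.le_max' _ _ (Finset.mem_image_of_mem _ hμ)
  obtain ⟨μ₁, hμ₁mem, hμ₁re⟩ := Finset.mem_image.mp ((nz₁.image Complex.re).max'_mem (hnz₁ne.image _))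
  obtain ⟨μ₂, hμ₂mem, hμ₂re⟩ := Finset.mem_image.mp ((nz₂.image Complex.re).max'_mem (hnz₂ne.image _))
  -- top coefficients are nonzero
  have hFtop : Gf (((2*r₁ : ℝ)):ℂ) ≠ 0 := by
    apply myG_top N Λ c₁ r₁
    · intro μ hμ hp
      exact hr₁max μ (Finset.mem_filter.mpr ⟨hμ, hp⟩)
    · obtain ⟨h1, h2⟩ := Finset.mem_filter.mp hμ₁mem
      exact ⟨μ₁, h1, hμ₁re, h2⟩
  have hGtop : Gg (((2*r₂ : ℝ)):ℂ) ≠ 0 := by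
    apply myG_top N Λ c₂ r₂
    · intro μ hμ hp
      exact hr₂max μ (Finset.mem_filter.mpr ⟨hμ, hp⟩)
    · obtain ⟨h1, h2⟩ := Finset.mem_filter.mp hμ₂mem
      exact ⟨μ₂, h1, hμ₂re, h2⟩
  -- bounds on supports
  have hFbound : ∀ ν, Gf ν ≠ 0 → ν.re ≤ 2*r₁ ∧
      ∃ a ∈ nz₁, ∃ b ∈ nz₁, (starRingEnd ℂ) a + b = ν := by
    intro ν h
    obtain ⟨μ, hμ, μ', hμ', he, hp, hp'⟩ := myG_support N Λ c₁ ν h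
    have ha : μ ∈ nz₁ := Finset.mem_filter.mpr ⟨hμ, hp⟩
    have hb : μ' ∈ nz₁ := Finset.mem_filter.mpr ⟨hμ', hp'⟩
    constructor
    · have := congrArg Complex.re he
      simp at this
      have h1 := hr₁max μ ha
      have h2 := hr₁max μ' hb
      linarith
    · exact ⟨μ, ha, μ', hb, he⟩
  have hGbound : ∀ ν, Gg ν ≠ 0 → ν.re ≤ 2*r₂ ∧
      ∃ a ∈ nz₂, ∃ b ∈ nz₂, (starRingEnd ℂ) a + b = ν := by
    intro ν h
    obtain ⟨μ, hμ, μ', hμ', he, hp, hp'⟩ := myG_support N Λ c₂ ν h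
    have ha : μ ∈ nz₂ := Finset.mem_filter.mpr ⟨hμ, hp⟩
    have hb : μ' ∈ nz₂ := Finset.mem_filter.mpr ⟨hμ', hp'⟩
    constructor
    · have := congrArg Complex.re he
      simp at this
      have h1 := hr₂max μ ha
      have h2 := hr₂max μ' hb
      linarith
    · exact ⟨μ, ha, μ', hb, he⟩
  -- step 1 : r₁ ≤ r₂
  have hr12 : r₁ ≤ r₂ := by
    by_contra hlt
    push_neg at hlt
    have h := hHzero (((2*r₁ : ℝ)):ℂ)
    have h1 : Gg (((2*r₁ : ℝ)):ℂ) = 0 := by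
      by_contra hne
      have := (hGbound _ hne).1
      simp at this
      linarith
    have h2 : Gg ((((2*r₁ : ℝ)):ℂ) - ζ) = 0 := by
      by_contra hne
      have := (hGbound _ hne).1
      simp [Complex.sub_re, hζre] at this
      linarith
    have h3 : Gg ((((2*r₁ : ℝ)):ℂ) + ζ) = 0 := by
      by_contra hne
      have := (hGbound _ hne).1
      simp [Complex.add_re, hζre] at this
      linarith
    rw [hHfdef] at h
    simp only [h1, h2, h3, mul_zero, sub_zero, add_zero] at h
    exact hFtop h
  -- step 2 : contradiction at frequency 2 r₂ + ζ
  set ν0 : ℂ := (((2*r₂ : ℝ)):ℂ) + ζ with hν0def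
  have hν0re : ν0.re = 2*r₂ := by simp [hν0def, Complex.add_re, hζre]
  have hν0im : ν0.im = ω := by simp [hν0def, Complex.add_im, hζim]
  have hωmem : ∀ (a b : ℂ), a.re = b.re →
      (ω = b.im - a.im ∨ ω = (b.im - a.im)/2) → a ∈ Λ → b ∈ Λ → False := by
    intro a b hre hcases haΛ hbΛ
    obtain ⟨k, _, hk⟩ := Finset.mem_image.mp hbΛ
    obtain ⟨k₁, _, hk₁⟩ := Finset.mem_image.mp haΛ
    apply hω
    right
    refine ⟨k, k₁, ?_, ?_⟩
    · rw [hk, hk₁]; exact hre.symm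
    · rw [hk, hk₁]
      exact hcases
  have hF0 : Gf ν0 = 0 := by
    by_contra hne
    obtain ⟨hle, a, ha, b, hb, he⟩ := hFbound ν0 hne
    have hare : a.re ≤ r₁ := hr₁max a ha
    have hbre : b.re ≤ r₁ := hr₁max b hb
    have hsum : a.re + b.re = 2*r₂ := by
      have := congrArg Complex.re he
      simp [hν0re] at this
      linarith [this]
    have haeq : a.re = r₂ := by linarith
    have hbeq : b.re = r₂ := by linarith
    have him : ω = b.im - a.im := by
      have := congrArg Complex.im he
      simp [hν0im] at this
      linarith [this]
    exact hωmem a b (by rw [haeq, hbeq]) (Or.inl him)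
      (Finset.mem_of_mem_filter a ha) (Finset.mem_of_mem_filter b hb)
  have hG0 : Gg ν0 = 0 := by
    by_contra hne
    obtain ⟨hle, a, ha, b, hb, he⟩ := hGbound ν0 hne
    have hare : a.re ≤ r₂ := hr₂max a ha
    have hbre : b.re ≤ r₂ := hr₂max b hb
    have hsum : a.re + b.re = 2*r₂ := by
      have := congrArg Complex.re he
      simp [hν0re] at this
      linarith [this]
    have haeq : a.re = r₂ := by linarith
    have hbeq : b.re = r₂ := by linarith
    have him : ω = b.im - a.im := by
      have := congrArg Complex.im he
      simp [hν0im] at this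
      linarith [this]
    exact hωmem a b (by rw [haeq, hbeq]) (Or.inl him)
      (Finset.mem_of_mem_filter a ha) (Finset.mem_of_mem_filter b hb)
  have hG2 : Gg (ν0 + ζ) = 0 := by
    by_contra hne
    obtain ⟨hle, a, ha, b, hb, he⟩ := hGbound (ν0 + ζ) hne
    have hare : a.re ≤ r₂ := hr₂max a ha
    have hbre : b.re ≤ r₂ := hr₂max b hb
    have hsum : a.re + b.re = 2*r₂ := by
      have := congrArg Complex.re he
      simp [Complex.add_re, hν0re, hζre] at this
      linarith [this]
    have haeq : a.re = r₂ := by linarith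
    have hbeq : b.re = r₂ := by linarith
    have him : ω = (b.im - a.im)/2 := by
      have := congrArg Complex.im he
      simp [Complex.add_im, hν0im, hζim] at this
      linarith [this]
    exact hωmem a b (by rw [haeq, hbeq]) (Or.inr him)
      (Finset.mem_of_mem_filter a ha) (Finset.mem_of_mem_filter b hb)
  have hkey := hHzero ν0
  rw [hHfdef] at hkey
  simp only [hF0, hG0, hG2, mul_zero, sub_zero, zero_sub, zero_add, neg_add_eq_zero,
    zero_mul, add_zero] at hkey
  have hν0mζ : ν0 - ζ = (((2*r₂ : ℝ)):ℂ) := by rw [hν0def]; ring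
  rw [hν0mζ] at hkey
  rcases mul_eq_zero.mp hkey with h | h
  · rw [Polynomial.C_eq_zero] at h
    rw [hc4def] at h
    simp [Complex.I_ne_zero, _root_.div_eq_zero_iff] at h
  · exact hGtop h
end

section
/- Let D be a finite index set, (ν_k)_{k∈D} pairwise distinct real numbers, and for each k ∈ D vectors v_k ∈ U₁ and w_k ∈ U₂ in Hilbert spaces U₁, U₂. Let F(t) = ‖Σ_{k∈D} v_k e^{i ν_k t}‖²_{U₁} − (1 + (1/2) sin(ω t)) ‖Σ_{k∈D} w_k e^{i ν_k t}‖²_{U₂}, where ω ∈ ℝ is such that ω ≠ 0, ω ∉ {ν_k − ν_{k₁} : k, k₁ ∈ D}, and in the expansion of F as a finite sum Σ_j a_j e^{i μ_j t} the frequencies 0 and ω each occur exactly once. If F(t) → 0 as t → −∞, then Σ_{k∈D} ‖v_k‖²_{U₁} = Σ_{k∈D} ‖w_k‖²_{U₂} and Σ_{k∈D} ‖w_k‖²_{U₂} = 0; hence v_k = 0 and w_k = 0 for all k ∈ D. -/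
open Filter Complex

lemma norm_exp_I_mul_aux (r : ℝ) (z : ℂ) (hz : z.im = 0) :
    ‖Complex.exp (Complex.I * r * z)‖ = 1 := by
  rw [Complex.norm_exp]
  have h : (Complex.I * r * z).re = 0 := by
    simp [Complex.mul_re, Complex.mul_im, hz]
  rw [h, Real.exp_zero]

lemma exists_return {J : Type*} [Fintype J] (μ : J → ℝ) (ε : ℝ) (hε : 0 < ε) (N : ℝ) :
    ∃ t : ℝ, t ≤ N ∧ ∀ j, ‖Complex.exp (Complex.I * μ j * t) - 1‖ < ε := by
  set T : ℝ := max 1 (1 - N) with hT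
  have hT1 : (1:ℝ) ≤ T := le_max_left _ _
  have hTN : -T ≤ N := by
    have := le_max_right 1 (1 - N); linarith
  set x : ℕ → J → ℂ := fun n j => Complex.exp (Complex.I * μ j * (-((n : ℂ) * (T : ℂ)))) with hx
  have hb : ∀ n, x n ∈ Metric.closedBall (0 : J → ℂ) 1 := by
    intro n
    rw [Metric.mem_closedBall, dist_zero_right]
    refine pi_norm_le_iff_of_nonneg zero_le_one |>.2 fun j => ?_
    exact le_of_eq (norm_exp_I_mul_aux _ _ (by simp))
  obtain ⟨a, -, φ, hφ, hconv⟩ := tendsto_subseq_of_bounded Metric.isBounded_closedBall hb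
  have h2 : ∀ᶠ k in atTop, dist ((x ∘ φ) k) a < ε / 2 :=
    (Metric.tendsto_nhds.1 hconv) (ε / 2) (by linarith)
  obtain ⟨k, hk⟩ := h2.exists_forall_of_atTop
  set n := φ k with hn
  set m := φ (k + 1) with hm
  have hnm : n < m := hφ (Nat.lt_succ_self k)
  have hdist : dist (x m) (x n) < ε := by
    have h1 := hk k le_rfl
    have h2' := hk (k + 1) (Nat.le_succ k)
    calc dist (x m) (x n) ≤ dist (x m) a + dist (x n) a := dist_triangle_right _ _ _
      _ < ε / 2 + ε / 2 := add_lt_add h2' h1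
      _ = ε := by ring
  refine ⟨-((m - n : ℕ) * T), ?_, fun j => ?_⟩
  · have h1 : (1:ℝ) ≤ ((m - n : ℕ) : ℝ) := by
      have : 1 ≤ m - n := Nat.le_sub_of_add_le (by omega)
      exact_mod_cast this
    nlinarith
  · have hcast : ((-((m - n : ℕ) * T) : ℝ) : ℂ) = -(((m - n : ℕ) : ℂ) * (T : ℂ)) := by
      push_cast; ring
    rw [hcast]
    have key : x m j - x n j =
        Complex.exp (Complex.I * μ j * (-((n : ℂ) * (T : ℂ)))) *
          (Complex.exp (Complex.I * μ j * (-(((m - n : ℕ) : ℂ) * (T : ℂ)))) - 1) := by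
      rw [mul_sub, mul_one, ← Complex.exp_add]
      have harg : Complex.I * μ j * (-((n : ℂ) * (T : ℂ))) +
          Complex.I * μ j * (-(((m - n : ℕ) : ℂ) * (T : ℂ))) =
          Complex.I * μ j * (-((m : ℂ) * (T : ℂ))) := by
        push_cast [Nat.cast_sub hnm.le]; ring
      rw [harg]
    have hnorm : ‖Complex.exp (Complex.I * μ j * (-(((m - n : ℕ) : ℂ) * (T : ℂ)))) - 1‖ =
        ‖x m j - x n j‖ := by
      rw [key, norm_mul, norm_exp_I_mul_aux _ _ (by simp), one_mul]
    calc ‖Complex.exp (Complex.I * μ j * (-(((m - n : ℕ) : ℂ) * (T : ℂ)))) - 1‖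
        = ‖x m j - x n j‖ := hnorm
      _ ≤ dist (x m) (x n) := by rw [← dist_eq_norm]; exact dist_le_pi_dist (x m) (x n) j
      _ < ε := hdist

lemma sum_exp_eq_zero_of_tendsto {J : Type*} [Fintype J] (μ : J → ℝ) (c : J → ℂ)
    (h : Tendsto (fun t : ℝ => ∑ j, c j * Complex.exp (Complex.I * μ j * t)) atBot (nhds 0)) :
    ∀ s : ℝ, ∑ j, c j * Complex.exp (Complex.I * μ j * s) = 0 := by
  intro s
  have hch : ∀ n : ℕ, ∃ t : ℝ, t ≤ -(n : ℝ) ∧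
      ∀ j, ‖Complex.exp (Complex.I * μ j * t) - 1‖ < 1 / (n + 1) :=
    fun n => exists_return μ (1 / (n + 1)) (by positivity) (-(n : ℝ))
  choose t ht1 ht2 using hch
  have htbot : Tendsto t atTop atBot :=
    tendsto_atBot_mono ht1 (tendsto_neg_atBot_iff.2 tendsto_natCast_atTop_atTop)
  have hexp : ∀ j, Tendsto (fun n => Complex.exp (Complex.I * μ j * t n)) atTop (nhds 1) := by
    intro j
    rw [tendsto_iff_norm_sub_tendsto_zero]
    refine squeeze_zero (fun n => norm_nonneg _) (fun n => (ht2 n j).le) ?_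
    exact tendsto_one_div_add_atTop_nhds_zero_nat
  have hA : Tendsto (fun n => ∑ j, c j * Complex.exp (Complex.I * μ j * ((t n + s : ℝ) : ℂ)))
      atTop (nhds (∑ j, c j * Complex.exp (Complex.I * μ j * s))) := by
    have heq : ∀ n j, c j * Complex.exp (Complex.I * μ j * ((t n + s : ℝ) : ℂ)) =
        (c j * Complex.exp (Complex.I * μ j * s)) * Complex.exp (Complex.I * μ j * t n) := by
      intro n j
      have harg : (Complex.I * μ j * ((t n + s : ℝ) : ℂ)) =
          Complex.I * μ j * (s : ℂ) + Complex.I * μ j * (t n : ℂ) := by push_cast; ring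
      rw [harg, Complex.exp_add]
      ring
    simp only [heq]
    have h2 := tendsto_finset_sum (Finset.univ : Finset J)
      (fun j _ => ((hexp j).const_mul (c j * Complex.exp (Complex.I * μ j * s))))
    simpa using h2
  have hshift : Tendsto (fun n => t n + s) atTop atBot := tendsto_atBot_add_const_right _ s htbot
  have hB : Tendsto (fun n => ∑ j, c j * Complex.exp (Complex.I * μ j * ((t n + s : ℝ) : ℂ)))
      atTop (nhds 0) := h.comp hshift
  exact tendsto_nhds_unique hA hB

lemma fiber_sum_eq_zero {J : Type*} [Fintype J] (μ : J → ℝ) (c : J → ℂ)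
    (h : ∀ t : ℝ, ∑ j, c j * Complex.exp (Complex.I * μ j * t) = 0) (η : ℝ) :
    ∑ j ∈ Finset.univ.filter (fun j => μ j = η), c j = 0 := by
  classical
  -- characters
  set χ : ℝ → (Multiplicative ℝ →* ℂ) := fun r =>
    { toFun := fun x => Complex.exp (Complex.I * r * (Multiplicative.toAdd x : ℝ))
      map_one' := by simp
      map_mul' := by
        intro a b
        simp only [toAdd_mul]
        rw [show (Complex.I * r * ((Multiplicative.toAdd a + Multiplicative.toAdd b : ℝ) : ℂ)) =
          Complex.I * r * ((Multiplicative.toAdd a : ℝ) : ℂ) +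
            Complex.I * r * ((Multiplicative.toAdd b : ℝ) : ℂ) by push_cast; ring,
          Complex.exp_add] } with hχ
  have hχinj : Function.Injective χ := by
    intro r r' hrr
    by_contra hne
    have hd : r - r' ≠ 0 := sub_ne_zero.2 hne
    have := congrArg (fun f => f (Multiplicative.ofAdd (Real.pi / (r - r')))) hrr
    simp only [hχ, MonoidHom.coe_mk, OneHom.coe_mk, toAdd_ofAdd] at this
    have h1 : Complex.exp (Complex.I * r * (Real.pi / (r - r') : ℝ)) *
        Complex.exp (- (Complex.I * r' * (Real.pi / (r - r') : ℝ))) = 1 := by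
      rw [this, ← Complex.exp_add, add_neg_cancel, Complex.exp_zero]
    rw [← Complex.exp_add] at h1
    have harg : Complex.I * r * ((Real.pi / (r - r') : ℝ) : ℂ) +
        -(Complex.I * r' * ((Real.pi / (r - r') : ℝ) : ℂ)) = Real.pi * Complex.I := by
      have : ((r : ℂ) - r') ≠ 0 := by exact_mod_cast sub_ne_zero.2 (fun hh => hne (by exact_mod_cast hh))
      push_cast
      field_simp
      ring
    rw [harg, Complex.exp_pi_mul_I] at h1
    norm_num at h1
  have LI : LinearIndependent ℂ (fun r : ℝ => ((χ r : Multiplicative ℝ →* ℂ) : Multiplicative ℝ → ℂ)) :=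
    (linearIndependent_monoidHom (Multiplicative ℝ) ℂ).comp χ hχinj
  set S : Finset ℝ := Finset.univ.image μ with hS
  set b : ℝ → ℂ := fun η' => ∑ j ∈ Finset.univ.filter (fun j => μ j = η'), c j with hb
  have hsum : ∑ η' ∈ S, b η' • ((χ η' : Multiplicative ℝ →* ℂ) : Multiplicative ℝ → ℂ) = 0 := by
    funext x
    rw [Finset.sum_apply, Pi.zero_apply]
    have hregroup : ∑ η' ∈ S, ∑ j ∈ Finset.univ.filter (fun j => μ j = η'),
        c j * Complex.exp (Complex.I * μ j * (Multiplicative.toAdd x : ℝ)) =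
        ∑ j, c j * Complex.exp (Complex.I * μ j * (Multiplicative.toAdd x : ℝ)) :=
      Finset.sum_fiberwise_of_maps_to (fun j _ => Finset.mem_image_of_mem μ (Finset.mem_univ j)) _
    calc ∑ η' ∈ S, (b η' • ((χ η' : Multiplicative ℝ →* ℂ) : Multiplicative ℝ → ℂ)) x
        = ∑ η' ∈ S, ∑ j ∈ Finset.univ.filter (fun j => μ j = η'),
            c j * Complex.exp (Complex.I * μ j * (Multiplicative.toAdd x : ℝ)) := by
          refine Finset.sum_congr rfl fun η' _ => ?_
          rw [Pi.smul_apply, smul_eq_mul, hb]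
          simp only [hχ, MonoidHom.coe_mk, OneHom.coe_mk]
          rw [Finset.sum_mul]
          refine Finset.sum_congr rfl fun j hj => ?_
          rw [Finset.mem_filter] at hj
          rw [hj.2]
      _ = 0 := by rw [hregroup]; exact h _
  by_cases hη : η ∈ S
  · exact linearIndependent_iff'.1 LI S b hsum η hη
  · have : Finset.univ.filter (fun j => μ j = η) = ∅ := by
      rw [Finset.filter_eq_empty_iff]
      intro j _
      exact fun hj => hη (hj ▸ Finset.mem_image_of_mem μ (Finset.mem_univ j))
    rw [this, Finset.sum_empty]

lemma norm_sq_expand {U : Type*} [NormedAddCommGroup U] [InnerProductSpace ℂ U]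
    {D : Type*} [Fintype D] (ν : D → ℝ) (x : D → U) (t : ℝ) :
    ((‖∑ k, Complex.exp (Complex.I * (ν k : ℂ) * (t : ℂ)) • x k‖ ^ 2 : ℝ) : ℂ) =
      ∑ p : D × D, Complex.exp (Complex.I * ((ν p.2 - ν p.1 : ℝ) : ℂ) * (t : ℂ)) *
        (inner ℂ (x p.1) (x p.2) : ℂ) := by
  have h0 : ((‖∑ k, Complex.exp (Complex.I * (ν k : ℂ) * (t : ℂ)) • x k‖ ^ 2 : ℝ) : ℂ) =
      (inner ℂ (∑ l, Complex.exp (Complex.I * (ν l : ℂ) * (t : ℂ)) • x l)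
        (∑ k, Complex.exp (Complex.I * (ν k : ℂ) * (t : ℂ)) • x k) : ℂ) := by
    rw [inner_self_eq_norm_sq_to_K]
    norm_cast
  rw [h0, sum_inner, Fintype.sum_prod_type]
  refine Finset.sum_congr rfl fun l _ => ?_
  rw [inner_smul_left, inner_sum]
  rw [Finset.mul_sum]
  refine Finset.sum_congr rfl fun k _ => ?_
  rw [inner_smul_right]
  have hconj : (starRingEnd ℂ) (Complex.exp (Complex.I * (ν l : ℂ) * (t : ℂ))) =
      Complex.exp (-(Complex.I * (ν l : ℂ) * (t : ℂ))) := by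
    rw [← Complex.exp_conj]
    congr 1
    simp [map_mul, Complex.conj_I, Complex.conj_ofReal]
  rw [hconj, ← mul_assoc, ← Complex.exp_add]
  have harg : -(Complex.I * (ν l : ℂ) * (t : ℂ)) + Complex.I * (ν k : ℂ) * (t : ℂ) =
      Complex.I * ((ν k - ν l : ℝ) : ℂ) * (t : ℂ) := by push_cast; ring
  rw [harg]

theorem dominant_part_coefficients_vanish
    {D : Type*} [Fintype D] {U₁ U₂ : Type*}
    [NormedAddCommGroup U₁] [InnerProductSpace ℂ U₁]
    [NormedAddCommGroup U₂] [InnerProductSpace ℂ U₂]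
    (ν : D → ℝ) (hν : Function.Injective ν)
    (v : D → U₁) (w : D → U₂)
    (ω : ℝ) (hω0 : ω ≠ 0)
    (hω1 : ∀ k k₁ : D, k ≠ k₁ → ω ≠ ν k - ν k₁)
    (hω2 : ∀ k k₁ : D, k ≠ k₁ → 2 * ω ≠ ν k - ν k₁)
    (F : ℝ → ℝ)
    (hF : ∀ t : ℝ, F t =
      ‖∑ k, Complex.exp (Complex.I * (ν k : ℂ) * (t : ℂ)) • v k‖ ^ 2 -
        (1 + (1 / 2) * Real.sin (ω * t)) *
          ‖∑ k, Complex.exp (Complex.I * (ν k : ℂ) * (t : ℂ)) • w k‖ ^ 2)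
    (hlim : Tendsto F atBot (nhds 0)) :
    (∑ k, ‖v k‖ ^ 2 = ∑ k, ‖w k‖ ^ 2) ∧ (∑ k, ‖w k‖ ^ 2 = 0) ∧
      ∀ k, v k = 0 ∧ w k = 0 := by
  classical
  set μ' : Fin 3 × D × D → ℝ :=
    fun j => ![0, ω, -ω] j.1 + (ν j.2.2 - ν j.2.1) with hμ'
  set c' : Fin 3 × D × D → ℂ := fun j =>
    ![ (inner ℂ (v j.2.1) (v j.2.2) : ℂ) - (inner ℂ (w j.2.1) (w j.2.2) : ℂ),
       (Complex.I / 4) * (inner ℂ (w j.2.1) (w j.2.2) : ℂ),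
       (-Complex.I / 4) * (inner ℂ (w j.2.1) (w j.2.2) : ℂ) ] j.1 with hc'
  -- the exponential-sum representation of F
  have hFc : ∀ t : ℝ, ((F t : ℝ) : ℂ) = ∑ j, c' j * Complex.exp (Complex.I * μ' j * t) := by
    intro t
    have hv := norm_sq_expand ν v t
    have hw := norm_sq_expand ν w t
    have hsin : ((Real.sin (ω * t) : ℝ) : ℂ) =
        (Complex.exp (-(Complex.I * (ω : ℂ) * (t : ℂ))) -
          Complex.exp (Complex.I * (ω : ℂ) * (t : ℂ))) * Complex.I / 2 := by
      rw [Complex.ofReal_sin]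
      show (Complex.exp (-(((ω * t : ℝ) : ℂ)) * Complex.I) -
        Complex.exp ((((ω * t : ℝ)) : ℂ) * Complex.I)) * Complex.I / 2 = _
      push_cast
      ring_nf
    have hRHS : ∑ j, c' j * Complex.exp (Complex.I * μ' j * t) =
        (∑ p : D × D, Complex.exp (Complex.I * ((ν p.2 - ν p.1 : ℝ) : ℂ) * (t : ℂ)) *
          (inner ℂ (v p.1) (v p.2) : ℂ)) -
        (∑ p : D × D, Complex.exp (Complex.I * ((ν p.2 - ν p.1 : ℝ) : ℂ) * (t : ℂ)) *
          (inner ℂ (w p.1) (w p.2) : ℂ)) +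
        (Complex.I / 4) * Complex.exp (Complex.I * (ω : ℂ) * (t : ℂ)) *
          (∑ p : D × D, Complex.exp (Complex.I * ((ν p.2 - ν p.1 : ℝ) : ℂ) * (t : ℂ)) *
            (inner ℂ (w p.1) (w p.2) : ℂ)) +
        (-Complex.I / 4) * Complex.exp (-(Complex.I * (ω : ℂ) * (t : ℂ))) *
          (∑ p : D × D, Complex.exp (Complex.I * ((ν p.2 - ν p.1 : ℝ) : ℂ) * (t : ℂ)) *
            (inner ℂ (w p.1) (w p.2) : ℂ)) := by
      rw [Fintype.sum_prod_type, Fin.sum_univ_three]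
      simp only [hμ', hc', Matrix.cons_val_zero, Matrix.cons_val_one, Matrix.head_cons,
        Matrix.cons_val_two, Matrix.tail_cons]
      rw [Finset.mul_sum, Finset.mul_sum, ← Finset.sum_sub_distrib]
      congr 1
      congr 1
      · refine Finset.sum_congr rfl fun p _ => ?_
        rw [show ((0 + (ν p.2 - ν p.1) : ℝ) : ℂ) = ((ν p.2 - ν p.1 : ℝ) : ℂ) by push_cast; ring]
        ring
      · refine Finset.sum_congr rfl fun p _ => ?_
        rw [show Complex.I * ((ω + (ν p.2 - ν p.1) : ℝ) : ℂ) * (t : ℂ) =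
          Complex.I * (ω : ℂ) * (t : ℂ) + Complex.I * ((ν p.2 - ν p.1 : ℝ) : ℂ) * (t : ℂ) by
            push_cast; ring, Complex.exp_add]
        ring
      · refine Finset.sum_congr rfl fun p _ => ?_
        rw [show Complex.I * ((-ω + (ν p.2 - ν p.1) : ℝ) : ℂ) * (t : ℂ) =
          -(Complex.I * (ω : ℂ) * (t : ℂ)) + Complex.I * ((ν p.2 - ν p.1 : ℝ) : ℂ) * (t : ℂ) by
            push_cast; ring, Complex.exp_add]
        ring
    rw [hF t, hRHS]
    push_cast [hv, hw, hsin]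
    ring
  -- the exponential sum tends to zero at -∞, hence vanishes identically
  have htend : Tendsto (fun t : ℝ => ∑ j, c' j * Complex.exp (Complex.I * μ' j * t))
      atBot (nhds 0) := by
    have h1 : Tendsto (fun t : ℝ => ((F t : ℝ) : ℂ)) atBot (nhds 0) := by
      have := (Complex.continuous_ofReal.tendsto 0).comp hlim
      simpa [Function.comp_def] using this
    exact h1.congr hFc
  have hzero := sum_exp_eq_zero_of_tendsto μ' c' htend
  -- coefficient at frequency 0
  have h0 := fiber_sum_eq_zero μ' c' hzero 0
  have hw0 := fiber_sum_eq_zero μ' c' hzero ω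
  have hcond0 : ∀ p : D × D, (((0:ℝ) + (ν p.2 - ν p.1) = 0) ↔ p.2 = p.1) := by
    intro p
    constructor
    · intro h
      exact hν (by linarith)
    · intro h; rw [h]; ring
  have hcond1 : ∀ p : D × D, ¬(ω + (ν p.2 - ν p.1) = 0) := by
    intro p h
    by_cases hpq : p.1 = p.2
    · rw [hpq] at h; apply hω0; linarith
    · exact hω1 p.1 p.2 hpq (by linarith)
  have hcond2 : ∀ p : D × D, ¬(-ω + (ν p.2 - ν p.1) = 0) := by
    intro p h
    by_cases hpq : p.2 = p.1
    · rw [hpq] at h; apply hω0; linarith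
    · exact hω1 p.2 p.1 hpq (by linarith)
  have hcond0w : ∀ a b : D, ¬(ν b - ν a = ω) := by
    intro a b h
    by_cases hpq : b = a
    · rw [hpq] at h; apply hω0; linarith
    · exact hω1 b a hpq (by linarith)
  have hcond1w : ∀ p : D × D, ((ω + (ν p.2 - ν p.1) = ω) ↔ p.2 = p.1) := by
    intro p
    constructor
    · intro h
      exact hν (by linarith)
    · intro h; rw [h]; ring
  have hcond2w : ∀ p : D × D, ¬(-ω + (ν p.2 - ν p.1) = ω) := by
    intro p h
    by_cases hpq : p.2 = p.1
    · rw [hpq] at h; apply hω0; linarith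
    · exact hω2 p.2 p.1 hpq (by linarith)
  rw [Finset.sum_filter, Fintype.sum_prod_type, Fin.sum_univ_three] at h0 hw0
  simp only [hμ', hc', Matrix.cons_val_zero, Matrix.cons_val_one, Matrix.head_cons,
    Matrix.cons_val_two, Matrix.tail_cons, hcond0, hcond1, hcond2, if_false,
    Finset.sum_const_zero, add_zero, Fintype.sum_prod_type] at h0
  simp only [hμ', hc', Matrix.cons_val_zero, Matrix.cons_val_one, Matrix.head_cons,
    Matrix.cons_val_two, Matrix.tail_cons, zero_add, hcond0w, hcond1w, hcond2w, if_false,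
    Finset.sum_const_zero, add_zero, zero_add, Fintype.sum_prod_type] at hw0
  -- now h0 : ∑ a, ∑ b, if b = a then ... else 0 = 0 , similarly hw0
  simp only [Finset.sum_ite_eq', Finset.mem_univ, if_true] at h0 hw0
  -- extract the real statements
  have hWsum : ∑ k, ‖w k‖ ^ 2 = 0 := by
    rw [← Finset.mul_sum] at hw0
    have hI : (Complex.I / 4 : ℂ) ≠ 0 := by
      simp [Complex.I_ne_zero]
    have hsum : ∑ a : D, (inner ℂ (w a) (w a) : ℂ) = 0 := by
      rcases mul_eq_zero.1 hw0 with h | h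
      · exact absurd h hI
      · exact h
    have : ((∑ k, ‖w k‖ ^ 2 : ℝ) : ℂ) = 0 := by
      rw [← hsum]
      push_cast
      refine Finset.sum_congr rfl fun a _ => ?_
      rw [inner_self_eq_norm_sq_to_K]
      norm_cast
    exact_mod_cast this
  have hVWsum : ∑ k, ‖v k‖ ^ 2 = ∑ k, ‖w k‖ ^ 2 := by
    have : ((∑ k, ‖v k‖ ^ 2 : ℝ) : ℂ) = ((∑ k, ‖w k‖ ^ 2 : ℝ) : ℂ) := by
      have h1 : ∑ a : D, ((inner ℂ (v a) (v a) : ℂ) - (inner ℂ (w a) (w a) : ℂ)) = 0 := h0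
      rw [Finset.sum_sub_distrib, sub_eq_zero] at h1
      push_cast
      calc ∑ k, ((‖v k‖ : ℂ)) ^ 2 = ∑ a : D, (inner ℂ (v a) (v a) : ℂ) := by
            refine Finset.sum_congr rfl fun a _ => ?_
            rw [inner_self_eq_norm_sq_to_K]; norm_cast
        _ = ∑ a : D, (inner ℂ (w a) (w a) : ℂ) := h1
        _ = ∑ k, ((‖w k‖ : ℂ)) ^ 2 := by
            refine Finset.sum_congr rfl fun a _ => ?_
            rw [inner_self_eq_norm_sq_to_K]; norm_cast
    exact_mod_cast this
  have hVsum : ∑ k, ‖v k‖ ^ 2 = 0 := by rw [hVWsum, hWsum]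
  refine ⟨hVWsum, hWsum, fun k => ?_⟩
  constructor
  · have := (Finset.sum_eq_zero_iff_of_nonneg (fun i _ => sq_nonneg ‖v i‖)).1 hVsum k
      (Finset.mem_univ k)
    have h2 : ‖v k‖ = 0 := by
      have := pow_eq_zero_iff (n := 2) (by norm_num) |>.1 this
      exact this
    exact norm_eq_zero.1 h2
  · have := (Finset.sum_eq_zero_iff_of_nonneg (fun i _ => sq_nonneg ‖w i‖)).1 hWsum k
      (Finset.mem_univ k)
    have h2 : ‖w k‖ = 0 := by
      have := pow_eq_zero_iff (n := 2) (by norm_num) |>.1 this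
      exact this
    exact norm_eq_zero.1 h2
end
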